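/- arXiv:2011.07051 — 6 statements merged into one kernel-verified Lean document; each statement's English description precedes it below -/
import Mathlib

section
/- Let Ω be a standard Borel probability space and let S, Z, N, W be random variables on Ω taking values in standard Borel spaces. Suppose (a) Z is conditionally independent of N given S; (b) Z is conditionally independent of W given the pair (S, N); and (c) S is independent of the pair (W, N). Then the pair (Z, S) is independent of the pair (W, N). -/
/-!
The hypotheses (a) and (b) combine, by the contraction property of conditional independence,
into `Z ⫫ (W, N) | S`: given `(S, N)`, the conditional law of `Z` does not depend on `N` by (a),
so `P(Z ∈ A | S, N) = P(Z ∈ A | S)`, and the tower property turns (b) into a factorisation given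
`S` alone. Then for `B` in `σ(S)` and `F` in `σ(W, N)`,
`P(Z ∈ A, S ∈ B, F) = E[1_{S ∈ B} P(Z ∈ A | S) P(F | S)] = P(Z ∈ A, S ∈ B) P(F)`,
because `P(F | S) = P(F)` by (c).
-/

open MeasureTheory ProbabilityTheory MeasurableSpace

section Rectangles

variable {Ω α β : Type*} [MeasurableSpace α] [MeasurableSpace β]

def preimageRectangles (X : Ω → α) (Y : Ω → β) : Set (Set Ω) :=
  {t | ∃ A B, MeasurableSet A ∧ MeasurableSet B ∧ t = X ⁻¹' A ∩ Y ⁻¹' B}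

lemma preimageRectangles_eq_image (X : Ω → α) (Y : Ω → β) :
    preimageRectangles X Y = Set.preimage (fun ω => (X ω, Y ω)) ''
      Set.image2 (· ×ˢ ·) {A : Set α | MeasurableSet A} {B : Set β | MeasurableSet B} := by
  ext t
  constructor
  · rintro ⟨A, B, hA, hB, rfl⟩
    exact ⟨A ×ˢ B, ⟨A, hA, B, hB, rfl⟩, rfl⟩
  · rintro ⟨_, ⟨A, hA, B, hB, rfl⟩, rfl⟩
    exact ⟨A, B, hA, hB, rfl⟩

lemma measurableSet_of_mem_preimageRectangles [MeasurableSpace Ω] {X : Ω → α} {Y : Ω → β}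
    (hX : Measurable X) (hY : Measurable Y) {t : Set Ω} (ht : t ∈ preimageRectangles X Y) :
    MeasurableSet t := by
  obtain ⟨A, B, hA, hB, rfl⟩ := ht
  exact (hX hA).inter (hY hB)

lemma isPiSystem_preimageRectangles (X : Ω → α) (Y : Ω → β) :
    IsPiSystem (preimageRectangles X Y) := by
  rw [preimageRectangles_eq_image]
  exact isPiSystem_prod.comap _

lemma comap_prodMk_eq_generateFrom_preimageRectangles (X : Ω → α) (Y : Ω → β) :
    (inferInstance : MeasurableSpace (α × β)).comap (fun ω => (X ω, Y ω)) =
      generateFrom (preimageRectangles X Y) := by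
  rw [preimageRectangles_eq_image, ← comap_generateFrom, generateFrom_prod]

end Rectangles

section CondExp

variable {Ω : Type*} {m m₁ m₂ mΩ : MeasurableSpace Ω} {μ : Measure Ω} {s t u : Set Ω}

lemma ae_norm_condExp_indicator_le_one (s : Set Ω) : ∀ᵐ ω ∂μ, ‖(μ⟦s | m⟧) ω‖ ≤ 1 := by
  have h : ∀ᵐ ω ∂μ, |s.indicator (fun _ => (1 : ℝ)) ω| ≤ 1 :=
    .of_forall fun ω => by by_cases hω : ω ∈ s <;> simp [hω]
  simpa using ae_bdd_abs_condExp_of_ae_bdd_abs h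

variable [IsFiniteMeasure μ]

lemma condExp_indicator_inter (hs : MeasurableSet s) (ht : MeasurableSet[m] t) :
    μ⟦s ∩ t | m⟧ =ᵐ[μ] t.indicator (μ⟦s | m⟧) := by
  rw [Set.inter_comm, ← Set.indicator_indicator]
  exact condExp_indicator ((integrable_const 1).indicator hs) ht

lemma setIntegral_condExp_indicator (hm : m ≤ mΩ) (hs : MeasurableSet[m] s)
    (ht : MeasurableSet t) : ∫ ω in s, (μ⟦t | m⟧) ω ∂μ = μ.real (s ∩ t) := by
  rw [setIntegral_condExp hm ((integrable_const 1).indicator ht) hs, setIntegral_indicator ht,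
    setIntegral_const, smul_eq_mul, mul_one]

/-- Set-level contraction: condition on `m₂` first, where the factor `μ⟦s | m₂⟧ = μ⟦s | m₁⟧`
is `m₁`-measurable and therefore pulls out of `μ[· | m₁]`. -/
lemma condExp_inter_inter_ae_eq_mul (hm₁₂ : m₁ ≤ m₂) (hm₂ : m₂ ≤ mΩ) (hs : MeasurableSet s)
    (ht : MeasurableSet t) (hu : MeasurableSet[m₂] u)
    (hst : μ⟦s ∩ t | m₂⟧ =ᵐ[μ] μ⟦s | m₂⟧ * μ⟦t | m₂⟧) (hs₁ : μ⟦s | m₂⟧ =ᵐ[μ] μ⟦s | m₁⟧) :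
    μ⟦s ∩ (t ∩ u) | m₁⟧ =ᵐ[μ] μ⟦s | m₁⟧ * μ⟦t ∩ u | m₁⟧ := by
  have hst₂ : μ⟦s ∩ (t ∩ u) | m₂⟧ =ᵐ[μ] μ⟦s | m₁⟧ * μ⟦t ∩ u | m₂⟧ := calc
    μ⟦s ∩ (t ∩ u) | m₂⟧ = μ⟦s ∩ t ∩ u | m₂⟧ := by rw [Set.inter_assoc]
    _ =ᵐ[μ] u.indicator (μ⟦s ∩ t | m₂⟧) := condExp_indicator_inter (hs.inter ht) hu
    _ =ᵐ[μ] μ⟦s | m₁⟧ * u.indicator (μ⟦t | m₂⟧) := by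
        filter_upwards [hst, hs₁] with ω h h₁
        by_cases hω : ω ∈ u <;> simp [hω, h, h₁]
    _ =ᵐ[μ] μ⟦s | m₁⟧ * μ⟦t ∩ u | m₂⟧ :=
        Filter.EventuallyEq.rfl.mul (condExp_indicator_inter ht hu).symm
  calc μ⟦s ∩ (t ∩ u) | m₁⟧
      =ᵐ[μ] μ[μ⟦s ∩ (t ∩ u) | m₂⟧ | m₁] := (condExp_condExp_of_le hm₁₂ hm₂).symm
    _ =ᵐ[μ] μ[μ⟦s | m₁⟧ * μ⟦t ∩ u | m₂⟧ | m₁] := condExp_congr_ae hst₂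
    _ =ᵐ[μ] μ⟦s | m₁⟧ * μ[μ⟦t ∩ u | m₂⟧ | m₁] :=
        condExp_stronglyMeasurable_mul_of_bound (hm₁₂.trans hm₂) stronglyMeasurable_condExp
          integrable_condExp 1 (ae_norm_condExp_indicator_le_one _)
    _ =ᵐ[μ] μ⟦s | m₁⟧ * μ⟦t ∩ u | m₁⟧ :=
        Filter.EventuallyEq.rfl.mul (condExp_condExp_of_le hm₁₂ hm₂)

lemma measure_inter_inter_eq_mul (hm : m ≤ mΩ) (hs : MeasurableSet s) (ht : MeasurableSet[m] t)
    (hu : MeasurableSet u) (hsu : μ⟦s ∩ u | m⟧ =ᵐ[μ] μ⟦s | m⟧ * μ⟦u | m⟧)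
    (hu_const : μ⟦u | m⟧ =ᵐ[μ] fun _ => μ.real u) :
    μ (s ∩ t ∩ u) = μ (s ∩ t) * μ u := by
  have h : μ.real (s ∩ t ∩ u) = μ.real (s ∩ t) * μ.real u := calc
    μ.real (s ∩ t ∩ u) = ∫ ω in t, (μ⟦s ∩ u | m⟧) ω ∂μ := by
        rw [setIntegral_condExp_indicator hm ht (hs.inter hu), Set.inter_left_comm,
          ← Set.inter_assoc]
    _ = ∫ ω in t, (μ⟦s | m⟧) ω * μ.real u ∂μ := by
        refine setIntegral_congr_ae (hm t ht) ?_
        filter_upwards [hsu, hu_const] with ω h hω _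
        rw [h, Pi.mul_apply, hω]
    _ = μ.real (s ∩ t) * μ.real u := by
        rw [integral_mul_const, setIntegral_condExp_indicator hm ht hs, Set.inter_comm]
  rwa [measureReal_def, measureReal_def, measureReal_def, ← ENNReal.toReal_mul,
    ENNReal.toReal_eq_toReal_iff' (measure_ne_top _ _) (by finiteness)] at h

end CondExp

section RandomVariables

variable {Ω α β γ δ : Type*} [mΩ : MeasurableSpace Ω] [StandardBorelSpace Ω]
  [mα : MeasurableSpace α] [mβ : MeasurableSpace β] [MeasurableSpace γ]
  [mδ : MeasurableSpace δ] {μ : Measure Ω}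
  {S : Ω → α} {Z : Ω → β} {N : Ω → γ} {W : Ω → δ}

/-- Both sides are the regular conditional distribution of `Z` evaluated at `A`, and `Z ⫫ N | S`
says that this kernel does not depend on `N`. -/
theorem condExp_comap_prodMk_ae_eq_of_condIndepFun [StandardBorelSpace β] [Nonempty β]
    [StandardBorelSpace γ] [Nonempty γ] [IsFiniteMeasure μ]
    (hS : Measurable S) (hZ : Measurable Z) (hN : Measurable N)
    (h : CondIndepFun (mα.comap S) hS.comap_le Z N μ) {A : Set β} (hA : MeasurableSet A) :
    μ⟦Z ⁻¹' A | (inferInstance : MeasurableSpace (α × γ)).comap fun ω => (S ω, N ω)⟧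
      =ᵐ[μ] μ⟦Z ⁻¹' A | mα.comap S⟧ := by
  have hdistrib := (condIndepFun_iff_condDistrib_prod_ae_eq_prodMkRight hZ hN hS).mp h.symm
  calc μ⟦Z ⁻¹' A | (inferInstance : MeasurableSpace (α × γ)).comap fun ω => (S ω, N ω)⟧
      =ᵐ[μ] fun ω => (condDistrib Z (fun ω => (S ω, N ω)) μ (S ω, N ω)).real A :=
        (condDistrib_ae_eq_condExp (hS.prodMk hN) hZ hA).symm
    _ =ᵐ[μ] fun ω => (condDistrib Z S μ (S ω)).real A := by
        filter_upwards [ae_of_ae_map (hS.prodMk hN).aemeasurable hdistrib] with ω hω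
        rw [hω, Kernel.prodMkRight_apply]
    _ =ᵐ[μ] μ⟦Z ⁻¹' A | mα.comap S⟧ := condDistrib_ae_eq_condExp hS hZ hA

theorem ProbabilityTheory.CondIndepFun.contraction [StandardBorelSpace β] [Nonempty β]
    [StandardBorelSpace γ] [Nonempty γ] [IsFiniteMeasure μ]
    (hS : Measurable S) (hZ : Measurable Z) (hN : Measurable N) (hW : Measurable W)
    (hZN : CondIndepFun (mα.comap S) hS.comap_le Z N μ)
    (hZW : CondIndepFun ((inferInstance : MeasurableSpace (α × γ)).comap fun ω => (S ω, N ω))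
      (hS.prodMk hN).comap_le Z W μ) :
    CondIndepFun (mα.comap S) hS.comap_le Z (fun ω => (W ω, N ω)) μ := by
  rw [condIndepFun_iff_condIndep]
  refine CondIndepSets.condIndep hZ.comap_le (hW.prodMk hN).comap_le
    (@isPiSystem_measurableSet Ω (mβ.comap Z)) (isPiSystem_preimageRectangles W N)
    (@generateFrom_measurableSet Ω (mβ.comap Z)).symm
    (comap_prodMk_eq_generateFrom_preimageRectangles W N) ?_
  rw [condIndepSets_iff _ _ {s | MeasurableSet[mβ.comap Z] s} _ hZ.comap_le fun _ =>
    measurableSet_of_mem_preimageRectangles hW hN]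
  rintro _ _ ⟨A, hA, rfl⟩ ⟨C, D, hC, hD, rfl⟩
  exact condExp_inter_inter_ae_eq_mul
    (measurable_fst.comp (comap_measurable (fun ω => (S ω, N ω)))).comap_le
    (hS.prodMk hN).comap_le (hZ hA) (hW hC) (measurable_snd.comp (comap_measurable _) hD)
    ((condIndepFun_iff_condExp_inter_preimage_eq_mul hZ hW).mp hZW A C hA hC)
    (condExp_comap_prodMk_ae_eq_of_condIndepFun hS hZ hN hZN hA)

theorem indepFun_prodMk_of_condIndepFun [IsProbabilityMeasure μ]
    (hS : Measurable S) (hZ : Measurable Z) (hW : Measurable W)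
    (hZW : CondIndepFun (mα.comap S) hS.comap_le Z W μ) (hSW : IndepFun S W μ) :
    IndepFun (fun ω => (Z ω, S ω)) W μ := by
  rw [IndepFun_iff_Indep]
  refine IndepSets.indep (hZ.prodMk hS).comap_le hW.comap_le (isPiSystem_preimageRectangles Z S)
    (@isPiSystem_measurableSet Ω (mδ.comap W))
    (comap_prodMk_eq_generateFrom_preimageRectangles Z S)
    (@generateFrom_measurableSet Ω (mδ.comap W)).symm ?_
  rw [IndepSets_iff]
  rintro _ _ ⟨A, B, hA, hB, rfl⟩ ⟨C, hC, rfl⟩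
  have hW_const : μ⟦W ⁻¹' C | mα.comap S⟧ =ᵐ[μ] fun _ => μ.real (W ⁻¹' C) := by
    refine (condExp_indep_eq hW.comap_le hS.comap_le
      (stronglyMeasurable_const.indicator (comap_measurable W hC)) hSW.symm).trans ?_
    rw [integral_indicator (hW hC), setIntegral_const, smul_eq_mul, mul_one]
  exact measure_inter_inter_eq_mul hS.comap_le (hZ hA) (comap_measurable S hB) (hW hC)
    ((condIndepFun_iff_condExp_inter_preimage_eq_mul hZ hW).mp hZW A C hA hC) hW_const

end RandomVariables

theorem stmt2_general {Ω α β γ δ : Type*} [MeasurableSpace Ω] [StandardBorelSpace Ω]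
    [MeasurableSpace α]
    [MeasurableSpace β] [StandardBorelSpace β]
    [MeasurableSpace γ] [StandardBorelSpace γ]
    [MeasurableSpace δ]
    (μ : Measure Ω) [IsProbabilityMeasure μ]
    (S : Ω → α) (Z : Ω → β) (N : Ω → γ) (W : Ω → δ)
    (hS : Measurable S) (hZ : Measurable Z) (hN : Measurable N) (hW : Measurable W)
    (ha : CondIndepFun (MeasurableSpace.comap S inferInstance) hS.comap_le Z N μ)
    (hb : CondIndepFun (MeasurableSpace.comap (fun ω => (S ω, N ω)) inferInstance)
      (Measurable.comap_le (hS.prodMk hN)) Z W μ)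
    (hc : IndepFun S (fun ω => (W ω, N ω)) μ) :
    IndepFun (fun ω => (Z ω, S ω)) (fun ω => (W ω, N ω)) μ := by
  obtain ⟨ω⟩ := nonempty_of_isProbabilityMeasure μ
  have : Nonempty β := ⟨Z ω⟩
  have : Nonempty γ := ⟨N ω⟩
  exact indepFun_prodMk_of_condIndepFun hS hZ (hW.prodMk hN)
    (ha.contraction hS hZ hN hW hb) hc

/-- Contraction-style lemma: if `Z ⫫ N | S`, `Z ⫫ W | (S, N)` and `S ⫫ (W, N)`,
then `(Z, S) ⫫ (W, N)`. -/
theorem stmt2 {Ω α β γ δ : Type*} [MeasurableSpace Ω] [StandardBorelSpace Ω]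
    [MeasurableSpace α] [StandardBorelSpace α]
    [MeasurableSpace β] [StandardBorelSpace β]
    [MeasurableSpace γ] [StandardBorelSpace γ]
    [MeasurableSpace δ] [StandardBorelSpace δ]
    (μ : Measure Ω) [IsProbabilityMeasure μ]
    (S : Ω → α) (Z : Ω → β) (N : Ω → γ) (W : Ω → δ)
    (hS : Measurable S) (hZ : Measurable Z) (hN : Measurable N) (hW : Measurable W)
    (ha : CondIndepFun (MeasurableSpace.comap S inferInstance) hS.comap_le Z N μ)
    (hb : CondIndepFun (MeasurableSpace.comap (fun ω => (S ω, N ω)) inferInstance)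
      (Measurable.comap_le (hS.prodMk hN)) Z W μ)
    (hc : IndepFun S (fun ω => (W ω, N ω)) μ) :
    IndepFun (fun ω => (Z ω, S ω)) (fun ω => (W ω, N ω)) μ :=
  stmt2_general μ S Z N W hS hZ hN hW ha hb hc
end

section
/- Under assumptions (a)–(d), the IV estimand ϑ_IV := E[𝒵 X']⁻¹ E[𝒵 Y] = (α_IV, β_IV, γ_IV, δ_IV)' satisfies: α_IV = E[α]; β_IV = E[β | C = 1]; γ_IV = E[γ] + Cov(C̄, γ)/E[C̄]; and δ_IV = E[δ | C = 1] + Cov(C̄, δ | C = 1)/E[C̄ | C = 1], where Cov(C̄, δ | C = 1) denotes the covariance computed under the conditional distribution given {C = 1}. -/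
/-!
Under (c) the IV estimand is the unique solution `t` of the moment equations
`E[𝒵 (Y - X't)] = 0`, so it suffices to exhibit one. Take
`t = (E[α], E[Cβ]/E[C], E[C̄γ]/E[C̄], E[CC̄δ]/E[CC̄])`. For a bounded function `φ(Z, S)` of the
instruments, the tower property and (a) replace `D̄` by `C̄ S` in `E[φ(Z, S) (Y - X't)]`, which
then splits into four terms `E[ψ(Z, S) w (κ - tₖ)]` with weight `w ∈ {1, C, C̄, CC̄}` and
coefficient `κ ∈ {α, β, γ, δ}`. By (b) each term factorises, and `tₖ` is chosen to make
`E[w (κ - tₖ)]` vanish. Finally `E[f | C = 1] = E[C f] / E[C]` turns `t` into the stated formulas.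
-/

open MeasureTheory ProbabilityTheory Matrix

section MomentMatrix

variable {Ω ι : Type*} [MeasurableSpace Ω] {μ : Measure Ω} [Fintype ι]
  {𝒵 X : Ω → ι → ℝ} {Y : Ω → ℝ} {t : ι → ℝ}

theorem momentMatrix_mulVec
    (hZX : ∀ i j, Integrable (fun ω => 𝒵 ω i * X ω j) μ)
    (hZY : ∀ i, Integrable (fun ω => 𝒵 ω i * Y ω) μ)
    (horth : ∀ i, ∫ ω, 𝒵 ω i * (Y ω - X ω ⬝ᵥ t) ∂μ = 0) :
    (of fun i j => ∫ ω, 𝒵 ω i * X ω j ∂μ) *ᵥ t = fun i => ∫ ω, 𝒵 ω i * Y ω ∂μ := by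
  funext i
  have hZXt : ∀ ω, 𝒵 ω i * (X ω ⬝ᵥ t) = ∑ j, 𝒵 ω i * X ω j * t j := fun ω => by
    simp only [dotProduct, Finset.mul_sum, mul_assoc]
  have hint : Integrable (fun ω => 𝒵 ω i * (X ω ⬝ᵥ t)) μ := by
    simp only [hZXt]
    exact integrable_finsetSum _ fun j _ => (hZX i j).mul_const _
  have h := horth i
  simp only [mul_sub] at h
  rw [integral_sub (hZY i) hint, sub_eq_zero] at h
  rw [h, integral_congr_ae (ae_of_all _ hZXt),
    integral_finsetSum _ fun j _ => (hZX i j).mul_const _]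
  simp only [mulVec, dotProduct, of_apply, integral_mul_const]

theorem inv_momentMatrix_mulVec [DecidableEq ι]
    (hM : IsUnit (of fun i j => ∫ ω, 𝒵 ω i * X ω j ∂μ))
    (hZX : ∀ i j, Integrable (fun ω => 𝒵 ω i * X ω j) μ)
    (hZY : ∀ i, Integrable (fun ω => 𝒵 ω i * Y ω) μ)
    (horth : ∀ i, ∫ ω, 𝒵 ω i * (Y ω - X ω ⬝ᵥ t) ∂μ = 0) :
    (of fun i j => ∫ ω, 𝒵 ω i * X ω j ∂μ)⁻¹ *ᵥ (fun i => ∫ ω, 𝒵 ω i * Y ω ∂μ) = t := by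
  rw [← momentMatrix_mulVec hZX hZY horth, mulVec_mulVec,
    nonsing_inv_mul _ ((isUnit_iff_isUnit_det _).mp hM), one_mulVec]

end MomentMatrix

theorem integral_mul_sub_div_eq_zero {Ω : Type*} [MeasurableSpace Ω] {μ : Measure Ω}
    {w f : Ω → ℝ} (hw : Integrable w μ) (hwf : Integrable (fun ω => w ω * f ω) μ)
    (h : ∫ ω, w ω ∂μ ≠ 0) :
    ∫ ω, w ω * (f ω - (∫ ω, w ω * f ω ∂μ) / ∫ ω, w ω ∂μ) ∂μ = 0 := by
  simp only [mul_sub]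
  rw [integral_sub hwf (hw.mul_const _), integral_mul_const]
  field_simp
  ring

theorem indicator_eq_mul_of_zero_or_one {Ω : Type*} {C : Ω → ℝ}
    (hCval : ∀ ω, C ω = 0 ∨ C ω = 1) (g : Ω → ℝ) :
    {ω | C ω = 1}.indicator g = fun ω => C ω * g ω :=
  funext fun ω => by rcases hCval ω with h | h <;> simp [h]

theorem integral_eq_measureReal_of_zero_or_one {Ω : Type*} [MeasurableSpace Ω] {μ : Measure Ω}
    {C : Ω → ℝ} (hC : Measurable C) (hCval : ∀ ω, C ω = 0 ∨ C ω = 1) :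
    ∫ ω, C ω ∂μ = μ.real {ω | C ω = 1} := by
  have hs : MeasurableSet {ω | C ω = 1} := hC (measurableSet_singleton 1)
  simpa [indicator_eq_mul_of_zero_or_one hCval] using integral_indicator_one (μ := μ) hs

theorem integral_cond_eq_integral_mul_div {Ω : Type*} [MeasurableSpace Ω] {μ : Measure Ω}
    {C : Ω → ℝ} (hC : Measurable C) (hCval : ∀ ω, C ω = 0 ∨ C ω = 1) (f : Ω → ℝ) :
    ∫ ω, f ω ∂μ[|{ω | C ω = 1}] = (∫ ω, C ω * f ω ∂μ) / ∫ ω, C ω ∂μ := by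
  have hs : MeasurableSet {ω | C ω = 1} := hC (measurableSet_singleton 1)
  rw [integral_eq_measureReal_of_zero_or_one hC hCval, ← indicator_eq_mul_of_zero_or_one hCval,
    integral_indicator hs, ProbabilityTheory.cond,
    integral_smul_measure, ENNReal.toReal_inv, smul_eq_mul, inv_mul_eq_div, Measure.real]

theorem integral_condExp_mul {Ω : Type*} {m m₀ : MeasurableSpace Ω} {μ : Measure Ω}
    (hm : m ≤ m₀) [SigmaFinite (μ.trim hm)] {f g : Ω → ℝ} (hg : StronglyMeasurable[m] g)
    (hf : Integrable f μ) (hfg : Integrable (f * g) μ) :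
    ∫ ω, (μ[f|m]) ω * g ω ∂μ = ∫ ω, f ω * g ω ∂μ :=
  (integral_congr_ae (condExp_mul_of_stronglyMeasurable_right hg hfg hf)).symm.trans
    (integral_condExp hm)

theorem ProbabilityTheory.IndepFun.integral_comp_mul_comp_eq_zero {Ω α β : Type*}
    {mΩ : MeasurableSpace Ω} [MeasurableSpace α] [MeasurableSpace β] {μ : Measure[mΩ] Ω}
    {U : Ω → α} {V : Ω → β} (h : IndepFun U V μ) (hU : AEMeasurable U μ) (hV : AEMeasurable V μ)
    {f : α → ℝ} {g : β → ℝ} (hf : Measurable f) (hg : Measurable g)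
    (h0 : ∫ ω, g (V ω) ∂μ = 0) : ∫ ω, f (U ω) * g (V ω) ∂μ = 0 := by
  rw [h.integral_fun_comp_mul_comp hU hV hf.aestronglyMeasurable
    hg.aestronglyMeasurable, h0, mul_zero]

theorem MeasureTheory.Integrable.mul_of_mem_Icc {Ω : Type*} {mΩ : MeasurableSpace Ω}
    {μ : Measure[mΩ] Ω} {f g : Ω → ℝ} (hg : Integrable g μ) (hf : AEStronglyMeasurable f μ)
    (hfI : ∀ ω, f ω ∈ Set.Icc (0 : ℝ) 1) : Integrable (fun ω => f ω * g ω) μ :=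
  hg.bdd_mul hf (ae_of_all _ fun ω => by rw [Real.norm_of_nonneg (hfI ω).1]; exact (hfI ω).2)

/-- `m` plays the role of `ℛ`. -/
structure IsRandomCoefficientModel {Ω : Type*} {mΩ : MeasurableSpace Ω} (μ : Measure[mΩ] Ω)
    (m : MeasurableSpace Ω) (S Z C Cbar Dbar a b c d : Ω → ℝ) : Prop where
  le : m ≤ mΩ
  measurable_instrument : Measurable[m] fun ω => (Z ω, S ω)
  measurable_coefficients : Measurable[m] fun ω => (C ω, Cbar ω, a ω, b ω, c ω, d ω)
  measurable_Dbar : Measurable[mΩ] Dbar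
  Z_mem : ∀ ω, Z ω ∈ Set.Icc (0 : ℝ) 1
  S_mem : ∀ ω, S ω ∈ Set.Icc (0 : ℝ) 1
  C_mem : ∀ ω, C ω ∈ Set.Icc (0 : ℝ) 1
  Cbar_mem : ∀ ω, Cbar ω ∈ Set.Icc (0 : ℝ) 1
  Dbar_mem : ∀ ω, Dbar ω ∈ Set.Icc (0 : ℝ) 1
  integrable_a : Integrable a μ
  integrable_b : Integrable b μ
  integrable_c : Integrable c μ
  integrable_d : Integrable d μ
  indepFun : IndepFun (fun ω => (Z ω, S ω)) (fun ω => (C ω, Cbar ω, a ω, b ω, c ω, d ω)) μ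
  condExp_Dbar : μ[Dbar|m] =ᵐ[μ] fun ω => Cbar ω * S ω

namespace IsRandomCoefficientModel

variable {Ω : Type*} {m mΩ : MeasurableSpace Ω} {μ : Measure[mΩ] Ω}
  {S Z C Cbar Dbar a b c d : Ω → ℝ}

theorem integral_Dbar_mul [IsFiniteMeasure μ]
    (h : IsRandomCoefficientModel μ m S Z C Cbar Dbar a b c d)
    {g : Ω → ℝ} (hg : Measurable[m] g) (hgi : Integrable g μ) :
    ∫ ω, Dbar ω * g ω ∂μ = ∫ ω, Cbar ω * S ω * g ω ∂μ := by
  have hDbar : Integrable Dbar μ :=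
    .of_mem_Icc 0 1 h.measurable_Dbar.aemeasurable (ae_of_all _ h.Dbar_mem)
  rw [← integral_condExp_mul h.le hg.stronglyMeasurable hDbar
    (hgi.mul_of_mem_Icc h.measurable_Dbar.aestronglyMeasurable h.Dbar_mem)]
  refine integral_congr_ae ?_
  filter_upwards [h.condExp_Dbar] with ω hω
  rw [hω]

theorem integral_mul_deviations_eq_zero [IsFiniteMeasure μ]
    (h : IsRandomCoefficientModel μ m S Z C Cbar Dbar a b c d) {t₀ t₁ t₂ t₃ : ℝ}
    (h₀ : ∫ ω, (a ω - t₀) ∂μ = 0) (h₁ : ∫ ω, C ω * (b ω - t₁) ∂μ = 0)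
    (h₂ : ∫ ω, Cbar ω * (c ω - t₂) ∂μ = 0) (h₃ : ∫ ω, C ω * Cbar ω * (d ω - t₃) ∂μ = 0)
    {φ : ℝ × ℝ → ℝ} (hφ : Measurable φ) (hφI : ∀ ω, φ (Z ω, S ω) ∈ Set.Icc (0 : ℝ) 1) :
    ∫ ω, φ (Z ω, S ω) * ((a ω - t₀) + Z ω * (C ω * (b ω - t₁)) + S ω * (Cbar ω * (c ω - t₂))
      + Z ω * S ω * (C ω * Cbar ω * (d ω - t₃))) ∂μ = 0 := by
  obtain ⟨hm, hU, hV, -, hZ, hS, hC, hCbar, -, ha, hb, hc, hd, hind, -⟩ := h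
  have hae : ∀ f : Ω → ℝ, Measurable[m] f → AEStronglyMeasurable f μ :=
    fun f hf => (hf.mono hm le_rfl).aestronglyMeasurable
  have hU₀ := (hU.mono hm le_rfl).aemeasurable (μ := μ)
  have hV₀ := (hV.mono hm le_rfl).aemeasurable (μ := μ)
  set W := fun ω => φ (Z ω, S ω)
  have hWm : Measurable[m] W := hφ.comp hU
  have e₀ : ∫ ω, W ω * (a ω - t₀) ∂μ = 0 :=
    hind.integral_comp_mul_comp_eq_zero hU₀ hV₀ hφ (g := fun v => v.2.2.1 - t₀) (by fun_prop) h₀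
  have e₁ : ∫ ω, W ω * Z ω * (C ω * (b ω - t₁)) ∂μ = 0 :=
    hind.integral_comp_mul_comp_eq_zero hU₀ hV₀ (hφ.mul measurable_fst)
      (g := fun v => v.1 * (v.2.2.2.1 - t₁)) (by fun_prop) h₁
  have e₂ : ∫ ω, W ω * S ω * (Cbar ω * (c ω - t₂)) ∂μ = 0 :=
    hind.integral_comp_mul_comp_eq_zero hU₀ hV₀ (hφ.mul measurable_snd)
      (g := fun v => v.2.1 * (v.2.2.2.2.1 - t₂)) (by fun_prop) h₂
  have e₃ : ∫ ω, W ω * Z ω * S ω * (C ω * Cbar ω * (d ω - t₃)) ∂μ = 0 :=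
    hind.integral_comp_mul_comp_eq_zero hU₀ hV₀ ((hφ.mul measurable_fst).mul measurable_snd)
      (g := fun v => v.1 * v.2.1 * (v.2.2.2.2.2 - t₃)) (by fun_prop) h₃
  have i₀ : Integrable (fun ω => W ω * (a ω - t₀)) μ :=
    (ha.sub (integrable_const _)).mul_of_mem_Icc (hae W hWm) hφI
  have i₁ : Integrable (fun ω => W ω * Z ω * (C ω * (b ω - t₁))) μ :=
    ((hb.sub (integrable_const _)).mul_of_mem_Icc (hae _ hV.fst) hC).mul_of_mem_Icc
      (hae _ (hWm.mul hU.fst)) fun ω => unitInterval.mul_mem (hφI ω) (hZ ω)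
  have i₂ : Integrable (fun ω => W ω * S ω * (Cbar ω * (c ω - t₂))) μ :=
    ((hc.sub (integrable_const _)).mul_of_mem_Icc (hae _ hV.snd.fst) hCbar).mul_of_mem_Icc
      (hae _ (hWm.mul hU.snd)) fun ω => unitInterval.mul_mem (hφI ω) (hS ω)
  have i₃ : Integrable (fun ω => W ω * Z ω * S ω * (C ω * Cbar ω * (d ω - t₃))) μ :=
    ((hd.sub (integrable_const _)).mul_of_mem_Icc (hae _ (hV.fst.mul hV.snd.fst))
      fun ω => unitInterval.mul_mem (hC ω) (hCbar ω)).mul_of_mem_Icc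
      (hae _ ((hWm.mul hU.fst).mul hU.snd))
      fun ω => unitInterval.mul_mem (unitInterval.mul_mem (hφI ω) (hZ ω)) (hS ω)
  have i₀₁ : Integrable (fun ω => W ω * (a ω - t₀) + W ω * Z ω * (C ω * (b ω - t₁))) μ :=
    i₀.add i₁
  have i₂₃ : Integrable (fun ω => W ω * S ω * (Cbar ω * (c ω - t₂))
      + W ω * Z ω * S ω * (C ω * Cbar ω * (d ω - t₃))) μ :=
    i₂.add i₃
  calc _ = ∫ ω, (W ω * (a ω - t₀) + W ω * Z ω * (C ω * (b ω - t₁)))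
        + (W ω * S ω * (Cbar ω * (c ω - t₂)) + W ω * Z ω * S ω * (C ω * Cbar ω * (d ω - t₃))) ∂μ :=
        integral_congr_ae (ae_of_all _ fun ω => by ring)
    _ = 0 := by
        rw [integral_add i₀₁ i₂₃, integral_add i₀ i₁, integral_add i₂ i₃, e₀, e₁, e₂, e₃]
        norm_num

theorem integral_mul_residual_eq_zero [IsFiniteMeasure μ]
    (h : IsRandomCoefficientModel μ m S Z C Cbar Dbar a b c d) {t₀ t₁ t₂ t₃ : ℝ}
    (h₀ : ∫ ω, (a ω - t₀) ∂μ = 0) (h₁ : ∫ ω, C ω * (b ω - t₁) ∂μ = 0)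
    (h₂ : ∫ ω, Cbar ω * (c ω - t₂) ∂μ = 0) (h₃ : ∫ ω, C ω * Cbar ω * (d ω - t₃) ∂μ = 0)
    {φ : ℝ × ℝ → ℝ} (hφ : Measurable φ) (hφI : ∀ ω, φ (Z ω, S ω) ∈ Set.Icc (0 : ℝ) 1) :
    ∫ ω, φ (Z ω, S ω) * (a ω + b ω * (C ω * Z ω) + c ω * Dbar ω + d ω * (C ω * Z ω) * Dbar ω
      - ![1, C ω * Z ω, Dbar ω, C ω * Z ω * Dbar ω] ⬝ᵥ ![t₀, t₁, t₂, t₃]) ∂μ = 0 := by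
  have hU := h.measurable_instrument
  have hV := h.measurable_coefficients
  have hae : ∀ f : Ω → ℝ, Measurable[m] f → AEStronglyMeasurable f μ :=
    fun f hf => (hf.mono h.le le_rfl).aestronglyMeasurable
  set W := fun ω => φ (Z ω, S ω)
  set A := fun ω => W ω * ((a ω - t₀) + Z ω * (C ω * (b ω - t₁)))
  set B := fun ω => W ω * ((c ω - t₂) + Z ω * (C ω * (d ω - t₃)))
  have hB : Measurable[m] B := (hφ.comp hU).mul ((hV.snd.snd.snd.snd.fst.sub_const _).add
    (hU.fst.mul (hV.fst.mul (hV.snd.snd.snd.snd.snd.sub_const _))))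
  have integrable_W_mul {κ κ' : Ω → ℝ} (s s' : ℝ) (hκ : Integrable κ μ) (hκ' : Integrable κ' μ) :
      Integrable (fun ω => W ω * ((κ ω - s) + Z ω * (C ω * (κ' ω - s')))) μ :=
    ((hκ.sub (integrable_const s)).add (((hκ'.sub (integrable_const s')).mul_of_mem_Icc
      (hae _ hV.fst) h.C_mem).mul_of_mem_Icc (hae _ hU.fst) h.Z_mem)).mul_of_mem_Icc
      (hae _ (hφ.comp hU)) hφI
  have iA : Integrable A μ := integrable_W_mul _ _ h.integrable_a h.integrable_b
  have iB : Integrable B μ := integrable_W_mul _ _ h.integrable_c h.integrable_d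
  have iSB : Integrable (fun ω => Cbar ω * S ω * B ω) μ := iB.mul_of_mem_Icc
    (hae _ (hV.snd.fst.mul hU.snd)) fun ω => unitInterval.mul_mem (h.Cbar_mem ω) (h.S_mem ω)
  calc _ = ∫ ω, A ω + Dbar ω * B ω ∂μ := by
        refine integral_congr_ae (ae_of_all _ fun ω => ?_)
        simp only [W, A, B, dotProduct, Fin.sum_univ_four, cons_val_zero, cons_val_one, cons_val]
        ring
    _ = ∫ ω, A ω + Cbar ω * S ω * B ω ∂μ := by
        rw [integral_add iA (iB.mul_of_mem_Icc h.measurable_Dbar.aestronglyMeasurable h.Dbar_mem),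
          integral_add iA iSB, h.integral_Dbar_mul hB iB]
    _ = 0 := by
        rw [← h.integral_mul_deviations_eq_zero h₀ h₁ h₂ h₃ hφ hφI]
        refine integral_congr_ae (ae_of_all _ fun ω => ?_)
        simp only [A, B]
        ring

theorem ivEstimand_eq [IsFiniteMeasure μ]
    (h : IsRandomCoefficientModel μ m S Z C Cbar Dbar a b c d)
    {t₀ t₁ t₂ t₃ : ℝ}
    (h₀ : ∫ ω, (a ω - t₀) ∂μ = 0) (h₁ : ∫ ω, C ω * (b ω - t₁) ∂μ = 0)
    (h₂ : ∫ ω, Cbar ω * (c ω - t₂) ∂μ = 0) (h₃ : ∫ ω, C ω * Cbar ω * (d ω - t₃) ∂μ = 0)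
    (hM : IsUnit (of fun i j => ∫ ω, ![1, Z ω, S ω, Z ω * S ω] i
      * ![1, C ω * Z ω, Dbar ω, C ω * Z ω * Dbar ω] j ∂μ)) :
    (of fun i j => ∫ ω, ![1, Z ω, S ω, Z ω * S ω] i
      * ![1, C ω * Z ω, Dbar ω, C ω * Z ω * Dbar ω] j ∂μ)⁻¹
      *ᵥ (fun i => ∫ ω, ![1, Z ω, S ω, Z ω * S ω] i
        * (a ω + b ω * (C ω * Z ω) + c ω * Dbar ω + d ω * (C ω * Z ω) * Dbar ω) ∂μ)
      = ![t₀, t₁, t₂, t₃] := by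
  have hU := h.measurable_instrument.mono h.le le_rfl
  have hV := h.measurable_coefficients.mono h.le le_rfl
  have hφ : ∀ i, Measurable fun p : ℝ × ℝ => ![1, p.1, p.2, p.1 * p.2] i := by
    intro i
    fin_cases i
    exacts [measurable_const, measurable_fst, measurable_snd, measurable_fst.mul measurable_snd]
  have hφI : ∀ i ω, ![1, Z ω, S ω, Z ω * S ω] i ∈ Set.Icc (0 : ℝ) 1 := by
    intro i ω
    fin_cases i
    exacts [unitInterval.one_mem, h.Z_mem ω, h.S_mem ω,
      unitInterval.mul_mem (h.Z_mem ω) (h.S_mem ω)]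
  have hX : ∀ j, Measurable fun ω => ![1, C ω * Z ω, Dbar ω, C ω * Z ω * Dbar ω] j := by
    have hCZ : Measurable fun ω => C ω * Z ω := hV.fst.mul hU.fst
    intro j
    fin_cases j
    exacts [measurable_const, hCZ, h.measurable_Dbar, hCZ.mul h.measurable_Dbar]
  have hXI : ∀ j ω, ![1, C ω * Z ω, Dbar ω, C ω * Z ω * Dbar ω] j ∈ Set.Icc (0 : ℝ) 1 := by
    intro j ω
    have hCZ := unitInterval.mul_mem (h.C_mem ω) (h.Z_mem ω)
    fin_cases j
    exacts [unitInterval.one_mem, hCZ, h.Dbar_mem ω, unitInterval.mul_mem hCZ (h.Dbar_mem ω)]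
  have hY : Integrable (fun ω => a ω + b ω * (C ω * Z ω) + c ω * Dbar ω
      + d ω * (C ω * Z ω) * Dbar ω) μ := by
    refine (((h.integrable_a.add (h.integrable_b.mul_of_mem_Icc (hX 1).aestronglyMeasurable
      (hXI 1))).add (h.integrable_c.mul_of_mem_Icc (hX 2).aestronglyMeasurable (hXI 2))).add
      (h.integrable_d.mul_of_mem_Icc (hX 3).aestronglyMeasurable (hXI 3))).congr
      (ae_of_all _ fun ω => ?_)
    simp only [Fin.isValue, cons_val_zero, cons_val_one, cons_val, Pi.add_apply]
    ring
  refine inv_momentMatrix_mulVec hM (fun i j => ?_) (fun i => ?_) fun i =>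
    h.integral_mul_residual_eq_zero h₀ h₁ h₂ h₃ (hφ i) (hφI i)
  · exact (Integrable.of_mem_Icc 0 1 (hX j).aemeasurable (ae_of_all _ (hXI j))).mul_of_mem_Icc
      ((hφ i).comp hU).aestronglyMeasurable (hφI i)
  · exact hY.mul_of_mem_Icc ((hφ i).comp hU).aestronglyMeasurable (hφI i)

theorem ivEstimand_eq_weightedMeans [IsProbabilityMeasure μ]
    (h : IsRandomCoefficientModel μ m S Z C Cbar Dbar a b c d) (hC : ∫ ω, C ω ∂μ ≠ 0)
    (hCbar : ∫ ω, Cbar ω ∂μ ≠ 0) (hCCbar : ∫ ω, C ω * Cbar ω ∂μ ≠ 0)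
    (hM : IsUnit (of fun i j => ∫ ω, ![1, Z ω, S ω, Z ω * S ω] i
      * ![1, C ω * Z ω, Dbar ω, C ω * Z ω * Dbar ω] j ∂μ)) :
    (of fun i j => ∫ ω, ![1, Z ω, S ω, Z ω * S ω] i
      * ![1, C ω * Z ω, Dbar ω, C ω * Z ω * Dbar ω] j ∂μ)⁻¹
      *ᵥ (fun i => ∫ ω, ![1, Z ω, S ω, Z ω * S ω] i
        * (a ω + b ω * (C ω * Z ω) + c ω * Dbar ω + d ω * (C ω * Z ω) * Dbar ω) ∂μ)
      = ![∫ ω, a ω ∂μ, (∫ ω, C ω * b ω ∂μ) / ∫ ω, C ω ∂μ,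
          (∫ ω, Cbar ω * c ω ∂μ) / ∫ ω, Cbar ω ∂μ,
          (∫ ω, C ω * Cbar ω * d ω ∂μ) / ∫ ω, C ω * Cbar ω ∂μ] := by
  have hV := h.measurable_coefficients.mono h.le le_rfl
  have hCCbarI : ∀ ω, C ω * Cbar ω ∈ Set.Icc (0 : ℝ) 1 :=
    fun ω => unitInterval.mul_mem (h.C_mem ω) (h.Cbar_mem ω)
  have iC : Integrable C μ := .of_mem_Icc 0 1 hV.fst.aemeasurable (ae_of_all _ h.C_mem)
  have iCbar : Integrable Cbar μ :=
    .of_mem_Icc 0 1 hV.snd.fst.aemeasurable (ae_of_all _ h.Cbar_mem)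
  refine h.ivEstimand_eq ?_
    (integral_mul_sub_div_eq_zero iC
      (h.integrable_b.mul_of_mem_Icc hV.fst.aestronglyMeasurable h.C_mem) hC)
    (integral_mul_sub_div_eq_zero iCbar
      (h.integrable_c.mul_of_mem_Icc hV.snd.fst.aestronglyMeasurable h.Cbar_mem) hCbar)
    (integral_mul_sub_div_eq_zero (iCbar.mul_of_mem_Icc hV.fst.aestronglyMeasurable h.C_mem)
      (h.integrable_d.mul_of_mem_Icc (hV.fst.mul hV.snd.fst).aestronglyMeasurable hCCbarI)
      hCCbar) hM
  rw [integral_sub h.integrable_a (integrable_const _), integral_const, probReal_univ, one_smul,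
    sub_self]

end IsRandomCoefficientModel

/-- The naive IV estimand in the linear random-coefficients model:
`α_IV = E[α]`, `β_IV = E[β | C = 1]`, `γ_IV = E[γ] + Cov(C̄, γ)/E[C̄]`,
`δ_IV = E[δ | C = 1] + Cov(C̄, δ | C = 1)/E[C̄ | C = 1]`. -/
theorem stmt4 {Ω : Type*} [MeasurableSpace Ω] (μ : Measure Ω) [IsProbabilityMeasure μ]
    (S Z C Cbar Dbar a b c d : Ω → ℝ)
    (hSmeas : Measurable S) (hZmeas : Measurable Z) (hCmeas : Measurable C)
    (hCbarMeas : Measurable Cbar) (hDbarMeas : Measurable Dbar)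
    (hameas : Measurable a) (hbmeas : Measurable b)
    (hcmeas : Measurable c) (hdmeas : Measurable d)
    (hSfin : (Set.range S).Finite) (hSval : ∀ ω, S ω ∈ Set.Icc (0 : ℝ) 1)
    (hZval : ∀ ω, Z ω = 0 ∨ Z ω = 1) (hCval : ∀ ω, C ω = 0 ∨ C ω = 1)
    (hCbarVal : ∀ ω, Cbar ω ∈ Set.Icc (0 : ℝ) 1)
    (hDbarVal : ∀ ω, Dbar ω ∈ Set.Icc (0 : ℝ) 1)
    (haInt : Integrable a μ) (hbInt : Integrable b μ)
    (hcInt : Integrable c μ) (hdInt : Integrable d μ)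
    (D : Ω → ℝ) (hD : D = fun ω => C ω * Z ω)
    (Y : Ω → ℝ)
    (hY : Y = fun ω => a ω + b ω * D ω + c ω * Dbar ω + d ω * D ω * Dbar ω)
    (mR : MeasurableSpace Ω)
    (hmR : mR = MeasurableSpace.comap
      (fun ω => (S ω, Z ω, C ω, Cbar ω, a ω, b ω, c ω, d ω)) inferInstance)
    -- (a) E[D̄ | ℛ] = C̄ · S almost surely
    (hCondExp : μ[Dbar | mR] =ᵐ[μ] fun ω => Cbar ω * S ω)
    -- (b) (Z, S) independent of (C, C̄, α, β, γ, δ)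
    (hIndep : IndepFun (fun ω => (Z ω, S ω))
      (fun ω => (C ω, Cbar ω, a ω, b ω, c ω, d ω)) μ)
    (𝒵 X : Ω → Fin 4 → ℝ)
    (h𝒵 : 𝒵 = fun ω => ![1, Z ω, S ω, Z ω * S ω])
    (hX : X = fun ω => ![1, D ω, Dbar ω, D ω * Dbar ω])
    (M : Matrix (Fin 4) (Fin 4) ℝ)
    (hM : M = Matrix.of fun i j => ∫ ω, 𝒵 ω i * X ω j ∂μ)
    -- (c) E[𝒵 X'] invertible
    (hMinv : IsUnit M)
    -- (d) positivity conditions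
    (hCpos : 0 < μ {ω | C ω = 1})
    (hECbar : 0 < ∫ ω, Cbar ω ∂μ)
    (hECbarCond : 0 < ∫ ω, Cbar ω ∂(μ[|{ω | C ω = 1}]))
    (ϑ : Fin 4 → ℝ)
    (hϑ : ϑ = M⁻¹ *ᵥ (fun i => ∫ ω, 𝒵 ω i * Y ω ∂μ)) :
    ϑ 0 = ∫ ω, a ω ∂μ ∧
    ϑ 1 = ∫ ω, b ω ∂(μ[|{ω | C ω = 1}]) ∧
    ϑ 2 = (∫ ω, c ω ∂μ)
        + ((∫ ω, Cbar ω * c ω ∂μ) - (∫ ω, Cbar ω ∂μ) * ∫ ω, c ω ∂μ)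
          / ∫ ω, Cbar ω ∂μ ∧
    ϑ 3 = (∫ ω, d ω ∂(μ[|{ω | C ω = 1}]))
        + ((∫ ω, Cbar ω * d ω ∂(μ[|{ω | C ω = 1}]))
            - (∫ ω, Cbar ω ∂(μ[|{ω | C ω = 1}])) * ∫ ω, d ω ∂(μ[|{ω | C ω = 1}]))
          / ∫ ω, Cbar ω ∂(μ[|{ω | C ω = 1}]) := by
  subst hD hY hmR h𝒵 hX hM hϑ
  have hZI : ∀ ω, Z ω ∈ Set.Icc (0 : ℝ) 1 := fun ω => by rcases hZval ω with h | h <;> simp [h]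
  have hCI : ∀ ω, C ω ∈ Set.Icc (0 : ℝ) 1 := fun ω => by rcases hCval ω with h | h <;> simp [h]
  have hT : Measurable fun ω => (S ω, Z ω, C ω, Cbar ω, a ω, b ω, c ω, d ω) := by fun_prop
  have model : IsRandomCoefficientModel μ _ S Z C Cbar Dbar a b c d :=
    ⟨measurable_iff_comap_le.mp hT, (measurable_snd.fst.prodMk measurable_fst).comp
      (comap_measurable _), measurable_snd.snd.comp (comap_measurable _), hDbarMeas, hZI, hSval,
      hCI, hCbarVal, hDbarVal, haInt, hbInt, hcInt, hdInt, hIndep, hCondExp⟩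
  have hEC : 0 < ∫ ω, C ω ∂μ := by
    rw [integral_eq_measureReal_of_zero_or_one hCmeas hCval]
    exact ENNReal.toReal_pos hCpos.ne' (measure_ne_top μ _)
  have hECC : 0 < ∫ ω, C ω * Cbar ω ∂μ := by
    rwa [integral_cond_eq_integral_mul_div hCmeas hCval, div_pos_iff_of_pos_right hEC]
      at hECbarCond
  rw [model.ivEstimand_eq_weightedMeans hEC.ne' hECbar.ne' hECC.ne' hMinv]
  simp only [integral_cond_eq_integral_mul_div hCmeas hCval, Fin.isValue, cons_val, true_and]
  constructor
  · field_simp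
    ring
  · simp only [mul_assoc]
    field_simp
    ring
end

section
/- For every individual i ∈ {1,…,n}, the triple (S, Z_i, D̄_i) is conditionally independent of the pair (B_i, C_i) given C̄_i. -/
/-!
Exclusion and the Bernoulli design together say that the offers `(S, Z)` are independent of the
types `(C, B)`, and that the law of `(S, Z)` is invariant under permutations of the coordinates
of `Z`. On the event `{C = c}` the triple `(S, Z_i, D̄_i)` is a function of `(S, Z)` alone, and by
exchangeability its law depends on `c` only through the number of compliers among the peers of
`i`, that is, through `C̄_i`. Hence on each fibre `{C̄_i = c̄}` the triple is independent of
`(B_i, C_i)`, and for a conditioning variable with countably many values this is conditional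
independence.
-/

open MeasureTheory ProbabilityTheory Finset

section FiniteValued

variable {Ω α β : Type*} [MeasurableSpace Ω] [MeasurableSpace α] [MeasurableSingletonClass α]
  [MeasurableSpace β] {μ : Measure Ω} {U : Ω → α} {F : Finset α}

lemma measure_preimage_inter_eq_sum (hU : Measurable U) (hF : ∀ ω, U ω ∈ F) (A : Set α)
    [DecidablePred (· ∈ A)] (E : Set Ω) :
    μ (U ⁻¹' A ∩ E) = ∑ u ∈ F with u ∈ A, μ (U ⁻¹' {u} ∩ E) := by
  have hA : U ⁻¹' A = U ⁻¹' ↑(F.filter (· ∈ A)) := by ext ω; simp [hF ω]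
  rw [hA, ← Measure.restrict_apply (hU (Finset.measurableSet _)),
    ← sum_measure_preimage_singleton _ fun u _ => hU (measurableSet_singleton u)]
  exact Finset.sum_congr rfl fun u _ => Measure.restrict_apply (hU (measurableSet_singleton u))

lemma measure_eq_sum_preimage_singleton_inter (hU : Measurable U) (hF : ∀ ω, U ω ∈ F)
    (E : Set Ω) : μ E = ∑ u ∈ F, μ (U ⁻¹' {u} ∩ E) := by
  classical
  simpa using measure_preimage_inter_eq_sum (μ := μ) hU hF Set.univ E

lemma indepFun_of_measure_preimage_singleton_inter {V : Ω → β} (hU : Measurable U)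
    (hF : ∀ ω, U ω ∈ F)
    (h : ∀ u ∈ F, ∀ A, MeasurableSet A → μ (U ⁻¹' {u} ∩ V ⁻¹' A) = μ (U ⁻¹' {u}) * μ (V ⁻¹' A)) :
    IndepFun U V μ := by
  classical
  rw [indepFun_iff_measure_inter_preimage_eq_mul]
  intro s A _ hA
  rw [measure_preimage_inter_eq_sum hU hF, ← Set.inter_univ (U ⁻¹' s),
    measure_preimage_inter_eq_sum hU hF, Finset.sum_mul]
  exact Finset.sum_congr rfl fun u hu => by
    rw [Set.inter_univ, h u (Finset.mem_filter.1 hu).1 A hA]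

lemma measure_preimage_eq_of_measure_preimage_singleton_eq {U' : Ω → α} (hU : Measurable U)
    (hU' : Measurable U') (hF : ∀ ω, U ω ∈ F) (hF' : ∀ ω, U' ω ∈ F)
    (h : ∀ u ∈ F, μ (U ⁻¹' {u}) = μ (U' ⁻¹' {u})) (A : Set α) :
    μ (U ⁻¹' A) = μ (U' ⁻¹' A) := by
  classical
  rw [← Set.inter_univ (U ⁻¹' A), ← Set.inter_univ (U' ⁻¹' A),
    measure_preimage_inter_eq_sum hU hF, measure_preimage_inter_eq_sum hU' hF']
  exact Finset.sum_congr rfl fun u hu => by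
    simp only [Set.inter_univ, h u (Finset.mem_filter.1 hu).1]

end FiniteValued

section DiscreteConditioning

variable {Ω β β' γ : Type*} [MeasurableSpace Ω] [MeasurableSpace β] [MeasurableSpace β']
  {μ : Measure Ω} {W : Ω → γ}

lemma ae_measure_preimage_singleton_ne_zero (hW : (Set.range W).Countable) :
    ∀ᵐ ω ∂μ, μ (W ⁻¹' {W ω}) ≠ 0 := by
  rw [ae_iff]
  refine measure_mono_null (t := ⋃ c ∈ {c ∈ Set.range W | μ (W ⁻¹' {c}) = 0}, W ⁻¹' {c})
    (fun ω hω => Set.mem_biUnion ⟨Set.mem_range_self ω, not_not.1 hω⟩ rfl) ?_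
  exact (measure_biUnion_null_iff (hW.mono (Set.sep_subset _ _))).2 fun c hc => hc.2

variable [MeasurableSpace γ] [MeasurableSingletonClass γ] [StandardBorelSpace Ω] [Nonempty Ω]
  [IsFiniteMeasure μ]

lemma condExp_comap_ae_eq_cond (hW : Measurable W) (hWc : (Set.range W).Countable) {A : Set Ω}
    (hA : MeasurableSet A) :
    μ⟦A | MeasurableSpace.comap W inferInstance⟧ =ᵐ[μ] fun ω => μ[|W ⁻¹' {W ω}].real A := by
  filter_upwards [condDistrib_ae_eq_condExp hW measurable_id hA,
    ae_measure_preimage_singleton_ne_zero hWc] with ω hω hne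
  have hmap : μ.map W {W ω} = μ (W ⁻¹' {W ω}) := Measure.map_apply hW (measurableSet_singleton _)
  rw [Set.preimage_id] at hω
  rw [← hω, measureReal_def, measureReal_def, condDistrib_apply_of_ne_zero measurable_id _
    (hmap ▸ hne), hmap, Measure.map_apply (hW.prodMk measurable_id)
    ((measurableSet_singleton _).prod hA), Set.mk_preimage_prod, Set.preimage_id,
    cond_apply (hW (measurableSet_singleton _))]

theorem condIndepFun_comap_of_indepFun_cond {X : Ω → β} {Y : Ω → β'} (hW : Measurable W)
    (hWc : (Set.range W).Countable) (hX : Measurable X) (hY : Measurable Y)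
    (h : ∀ c, μ (W ⁻¹' {c}) ≠ 0 → IndepFun X Y μ[|W ⁻¹' {c}]) :
    CondIndepFun (MeasurableSpace.comap W inferInstance) hW.comap_le X Y μ := by
  rw [condIndepFun_iff_condExp_inter_preimage_eq_mul hX hY]
  intro s t hs ht
  filter_upwards [condExp_comap_ae_eq_cond hW hWc ((hX hs).inter (hY ht)),
    condExp_comap_ae_eq_cond hW hWc (hX hs), condExp_comap_ae_eq_cond hW hWc (hY ht),
    ae_measure_preimage_singleton_ne_zero hWc] with ω h₁ h₂ h₃ hne
  rw [h₁, h₂, h₃, measureReal_def, measureReal_def, measureReal_def, ← ENNReal.toReal_mul,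
    (h _ hne).measure_inter_preimage_eq_mul _ _ hs ht]

end DiscreteConditioning

lemma indepFun_of_measure_inter_preimage_eq_mul_left {Ω β β' : Type*} [MeasurableSpace Ω]
    [MeasurableSpace β] [MeasurableSpace β'] {μ : Measure Ω} [IsProbabilityMeasure μ]
    {X : Ω → β} {Y : Ω → β'} (φ : Set β → ENNReal)
    (h : ∀ s t, MeasurableSet s → MeasurableSet t → μ (X ⁻¹' s ∩ Y ⁻¹' t) = φ s * μ (Y ⁻¹' t)) :
    IndepFun X Y μ := by
  rw [indepFun_iff_measure_inter_preimage_eq_mul]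
  intro s t hs ht
  have hX : μ (X ⁻¹' s) = φ s := by simpa using h s Set.univ hs MeasurableSet.univ
  rw [h s t hs ht, hX]

lemma Equiv.Perm.exists_apply_eq_self_map_finset_eq {α : Type*} [DecidableEq α] {s t : Finset α}
    {a : α} (hs : a ∉ s) (ht : a ∉ t) (h : #s = #t) :
    ∃ σ : Equiv.Perm α, σ a = a ∧ s.map σ.toEmbedding = t := by
  obtain ⟨σ, hσ⟩ := Equiv.Perm.exists_map_finset_eq s t h
  have hσa : σ a ∉ t := by
    rw [← hσ]
    simpa using hs
  have hswap : t.map (Equiv.swap (σ a) a).toEmbedding = t := by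
    refine Finset.map_eq_of_subset fun x hx => ?_
    obtain ⟨y, hy, rfl⟩ := Finset.mem_map.1 hx
    rwa [Equiv.toEmbedding_apply, Equiv.swap_apply_of_ne_of_ne (ne_of_mem_of_not_mem hy hσa)
      (ne_of_mem_of_not_mem hy ht)]
  refine ⟨Equiv.swap (σ a) a * σ, by simp, ?_⟩
  rw [← hswap, ← hσ, Finset.map_map]
  rfl

section BernoulliDesign

variable {Ω β ι : Type*} [MeasurableSpace Ω] [MeasurableSpace β] [Fintype ι] {μ : Measure Ω}
  {𝒮 : Finset ℝ} {S : Ω → ℝ} {Z : Ω → ι → Bool} {V : Ω → β}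

def IsBernoulliDesign (μ : Measure Ω) (𝒮 : Finset ℝ) (S : Ω → ℝ) (Z : Ω → ι → Bool)
    (V : Ω → β) : Prop :=
  ∀ s ∈ 𝒮, 0 < μ (S ⁻¹' {s}) → ∀ z : ι → Bool, ∀ A : Set β, MeasurableSet A →
    μ[|S ⁻¹' {s}] (Z ⁻¹' {z} ∩ V ⁻¹' A)
      = ENNReal.ofReal (∏ j, if z j then s else 1 - s) * μ[|S ⁻¹' {s}] (V ⁻¹' A)

namespace IsBernoulliDesign

variable [IsFiniteMeasure μ]

lemma measure_inter (h : IsBernoulliDesign μ 𝒮 S Z V) (hS : Measurable S) {s : ℝ} (hs : s ∈ 𝒮)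
    (z : ι → Bool) {A : Set β} (hA : MeasurableSet A) :
    μ (S ⁻¹' {s} ∩ (Z ⁻¹' {z} ∩ V ⁻¹' A))
      = ENNReal.ofReal (∏ j, if z j then s else 1 - s) * μ (S ⁻¹' {s} ∩ V ⁻¹' A) := by
  have hSs : MeasurableSet (S ⁻¹' {s}) := hS (measurableSet_singleton s)
  rcases eq_or_ne (μ (S ⁻¹' {s})) 0 with h0 | h0
  · simp [measure_mono_null Set.inter_subset_left h0]
  rw [← cond_mul_eq_inter hSs, ← cond_mul_eq_inter hSs, h s hs (pos_iff_ne_zero.2 h0) z A hA,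
    mul_assoc]

lemma measure_preimage_singleton (h : IsBernoulliDesign μ 𝒮 S Z V) (hS : Measurable S)
    {s : ℝ} (hs : s ∈ 𝒮) (z : ι → Bool) :
    μ ((fun ω => (S ω, Z ω)) ⁻¹' {(s, z)})
      = ENNReal.ofReal (∏ j, if z j then s else 1 - s) * μ (S ⁻¹' {s}) := by
  simpa [← Set.singleton_prod_singleton, Set.mk_preimage_prod] using
    h.measure_inter hS hs z MeasurableSet.univ

lemma indepFun [DecidableEq ι] (h : IsBernoulliDesign μ 𝒮 S Z V) (hS : Measurable S)
    (hZ : Measurable Z) (hS𝒮 : ∀ ω, S ω ∈ 𝒮) (hSV : IndepFun S V μ) :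
    IndepFun (fun ω => (S ω, Z ω)) V μ := by
  refine indepFun_of_measure_preimage_singleton_inter (F := 𝒮 ×ˢ univ) (hS.prodMk hZ)
    (fun ω => mem_product.2 ⟨hS𝒮 ω, mem_univ _⟩) ?_
  rintro ⟨s, z⟩ hu A hA
  have hs := (mem_product.1 hu).1
  rw [h.measure_preimage_singleton hS hs, ← Set.singleton_prod_singleton, Set.mk_preimage_prod,
    Set.inter_assoc, h.measure_inter hS hs z hA,
    hSV.measure_inter_preimage_eq_mul _ _ (measurableSet_singleton s) hA, mul_assoc]

lemma measure_preimage_comp_perm [DecidableEq ι] (h : IsBernoulliDesign μ 𝒮 S Z V)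
    (hS : Measurable S) (hZ : Measurable Z) (hS𝒮 : ∀ ω, S ω ∈ 𝒮) (σ : Equiv.Perm ι) (A : Set (ℝ × (ι → Bool))) :
    μ ((fun ω => (S ω, Z ω ∘ σ)) ⁻¹' A) = μ ((fun ω => (S ω, Z ω)) ⁻¹' A) := by
  refine (measure_preimage_eq_of_measure_preimage_singleton_eq (F := 𝒮 ×ˢ univ) (hS.prodMk hZ)
    (hS.prodMk (by fun_prop)) (fun ω => mem_product.2 ⟨hS𝒮 ω, mem_univ _⟩)
    (fun ω => mem_product.2 ⟨hS𝒮 ω, mem_univ _⟩) ?_ A).symm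
  rintro ⟨s, z⟩ hu
  have hσ : (fun ω => (S ω, Z ω ∘ σ)) ⁻¹' {(s, z)}
      = (fun ω => (S ω, Z ω)) ⁻¹' {(s, z ∘ σ.symm)} := by
    ext ω
    simp [Equiv.eq_comp_symm]
  have hs : s ∈ 𝒮 := (mem_product.1 hu).1
  rw [hσ, h.measure_preimage_singleton hS hs, h.measure_preimage_singleton hS hs]
  exact congrArg (ENNReal.ofReal · * _)
    (Equiv.prod_comp σ.symm fun j => if z j then s else 1 - s).symm

end IsBernoulliDesign

end BernoulliDesign

section LeaveOneOut

variable {n : ℕ}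

-- The leave-one-out mean: `C̄_i = looMean i C` and `D̄_i = looMean i (C && Z)`.
noncomputable def looMean (i : Fin n) (c : Fin n → Bool) : ℝ :=
  (∑ j ∈ univ.erase i, if c j then (1 : ℝ) else 0) / ((n : ℝ) - 1)

-- `(S, Z_i, D̄_i)` as a function of the offers `u = (S, Z)` on the event `{C = c}`.
noncomputable def offerSummary (i : Fin n) (c : Fin n → Bool) (u : ℝ × (Fin n → Bool)) :
    ℝ × Bool × ℝ :=
  (u.1, u.2 i, looMean i fun j => c j && u.2 j)

lemma card_eq_of_looMean_eq (hn : 2 ≤ n) {i : Fin n} {c c' : Fin n → Bool}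
    (h : looMean i c = looMean i c') :
    #{j ∈ univ.erase i | c j} = #{j ∈ univ.erase i | c' j} := by
  have hn1 : (n : ℝ) - 1 ≠ 0 := by
    have : (2 : ℝ) ≤ n := by exact_mod_cast hn
    linarith
  rw [looMean, looMean, div_left_inj' hn1, sum_boole, sum_boole] at h
  exact_mod_cast h

lemma looMean_and (i : Fin n) (c z : Fin n → Bool) :
    looMean i (fun j => c j && z j)
      = (∑ j ∈ univ.erase i with c j, if z j then (1 : ℝ) else 0) / ((n : ℝ) - 1) := by
  rw [looMean, sum_filter]
  congr 1
  exact sum_congr rfl fun j _ => by cases c j <;> rfl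

lemma offerSummary_comp_perm {i : Fin n} {c c' : Fin n → Bool} {σ : Equiv.Perm (Fin n)}
    (hσi : σ i = i) (hσ : {j ∈ univ.erase i | c j}.map σ.toEmbedding = {j ∈ univ.erase i | c' j})
    (u : ℝ × (Fin n → Bool)) :
    offerSummary i c (u.1, u.2 ∘ σ) = offerSummary i c' u := by
  simp only [offerSummary, looMean_and, Function.comp_apply, hσi, ← hσ, sum_map,
    Equiv.toEmbedding_apply]

lemma measurable_offerSummary (i : Fin n) (c : Fin n → Bool) : Measurable (offerSummary i c) :=
  measurable_fst.prodMk (((measurable_pi_apply i).comp measurable_snd).prodMk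
    ((measurable_of_countable fun z : Fin n → Bool => looMean i fun j => c j && z j).comp
      measurable_snd))

end LeaveOneOut

section Group

variable {Ω : Type*} [MeasurableSpace Ω] {μ : Measure Ω} {n p : ℕ} {S : Ω → ℝ}
  {C Z : Ω → Fin n → Bool} {B : Ω → Fin n → Fin p → ℝ}

lemma measure_offerSummary_preimage_eq_of_looMean_eq (hn : 2 ≤ n)
    (hexch : ∀ (σ : Equiv.Perm (Fin n)) A,
      μ ((fun ω => (S ω, Z ω ∘ σ)) ⁻¹' A) = μ ((fun ω => (S ω, Z ω)) ⁻¹' A))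
    {i : Fin n} {c c' : Fin n → Bool} (h : looMean i c = looMean i c') (s : Set (ℝ × Bool × ℝ)) :
    μ ((fun ω => (S ω, Z ω)) ⁻¹' (offerSummary i c ⁻¹' s))
      = μ ((fun ω => (S ω, Z ω)) ⁻¹' (offerSummary i c' ⁻¹' s)) := by
  obtain ⟨σ, hσi, hσ⟩ := Equiv.Perm.exists_apply_eq_self_map_finset_eq (a := i) (by simp)
    (by simp) (card_eq_of_looMean_eq hn h)
  rw [← hexch σ]
  congr 1
  ext ω
  exact Iff.of_eq (congrArg (· ∈ s) (offerSummary_comp_perm hσi hσ (S ω, Z ω)))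

lemma measure_looMean_fiber_inter (hC : Measurable C) (hn : 2 ≤ n)
    (hind : IndepFun (fun ω => (S ω, Z ω)) (fun ω => (C ω, B ω)) μ)
    (hexch : ∀ (σ : Equiv.Perm (Fin n)) A,
      μ ((fun ω => (S ω, Z ω ∘ σ)) ⁻¹' A) = μ ((fun ω => (S ω, Z ω)) ⁻¹' A))
    (i : Fin n) (ω₀ : Ω) {s : Set (ℝ × Bool × ℝ)} {t : Set ((Fin p → ℝ) × Bool)}
    (hs : MeasurableSet s) (ht : MeasurableSet t) :
    μ ((fun ω => looMean i (C ω)) ⁻¹' {looMean i (C ω₀)} ∩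
        ((fun ω => offerSummary i (C ω) (S ω, Z ω)) ⁻¹' s ∩ (fun ω => (B ω i, C ω i)) ⁻¹' t))
      = μ ((fun ω => (S ω, Z ω)) ⁻¹' (offerSummary i (C ω₀) ⁻¹' s)) *
        μ ((fun ω => looMean i (C ω)) ⁻¹' {looMean i (C ω₀)} ∩
          (fun ω => (B ω i, C ω i)) ⁻¹' t) := by
  set G := (fun ω => looMean i (C ω)) ⁻¹' {looMean i (C ω₀)}
  set Yt := (fun ω => (B ω i, C ω i)) ⁻¹' t
  rw [measure_eq_sum_preimage_singleton_inter hC (fun ω => mem_univ (C ω)),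
    measure_eq_sum_preimage_singleton_inter hC (fun ω => mem_univ (C ω)) (G ∩ Yt), mul_sum]
  refine sum_congr rfl fun c _ => ?_
  by_cases hc : looMean i c = looMean i (C ω₀)
  · set R : Set ((Fin n → Bool) × (Fin n → Fin p → ℝ)) := {v | v.1 = c ∧ (v.2 i, v.1 i) ∈ t}
    have hR : MeasurableSet R :=
      (measurable_fst (measurableSet_singleton c)).inter ((by fun_prop : Measurable
        fun v : (Fin n → Bool) × (Fin n → Fin p → ℝ) => (v.2 i, v.1 i)) ht)
    -- On `{C = c}` both events split into an event of `(S, Z)` and an event of `(C, B)`.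
    have h₁ : C ⁻¹' {c} ∩ (G ∩ ((fun ω => offerSummary i (C ω) (S ω, Z ω)) ⁻¹' s ∩ Yt))
        = (fun ω => (S ω, Z ω)) ⁻¹' (offerSummary i c ⁻¹' s) ∩ (fun ω => (C ω, B ω)) ⁻¹' R := by
      ext ω
      simp only [Set.mem_inter_iff, Set.mem_preimage, Set.mem_singleton_iff, G, Yt, R,
        Set.mem_ofPred_eq]
      grind
    have h₂ : C ⁻¹' {c} ∩ (G ∩ Yt) = (fun ω => (C ω, B ω)) ⁻¹' R := by
      ext ω
      simp only [Set.mem_inter_iff, Set.mem_preimage, Set.mem_singleton_iff, G, Yt, R,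
        Set.mem_ofPred_eq]
      grind
    rw [h₁, h₂, hind.measure_inter_preimage_eq_mul _ _ (measurable_offerSummary i c hs) hR,
      measure_offerSummary_preimage_eq_of_looMean_eq hn hexch hc]
  · have hG : C ⁻¹' {c} ∩ G = ∅ := by
      ext ω
      simp only [G, Set.mem_inter_iff, Set.mem_preimage, Set.mem_singleton_iff,
        Set.mem_empty_iff_false, iff_false, not_and]
      rintro rfl
      exact hc
    simp only [← Set.inter_assoc, hG, Set.empty_inter, measure_empty, mul_zero]

end Group

theorem stmt5_general {Ω : Type*} [MeasurableSpace Ω] [StandardBorelSpace Ω] [Nonempty Ω]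
    (μ : Measure Ω) [IsProbabilityMeasure μ]
    (n : ℕ) (hn : 2 ≤ n) (p : ℕ)
    (𝒮 : Finset ℝ)
    (S : Ω → ℝ) (C Z : Ω → Fin n → Bool) (B : Ω → Fin n → Fin p → ℝ)
    (hSmeas : Measurable S) (hCmeas : Measurable C)
    (hZmeas : Measurable Z) (hBmeas : Measurable B)
    (hSval : ∀ ω, S ω ∈ 𝒮)
    -- Exclusion: S independent of (C, B)
    (hExcl : IndepFun S (fun ω => (C ω, B ω)) μ)
    -- Bernoulli design with exclusion: conditionally on {S = s}, Z is product-Bernoulli(s)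
    -- and independent of (C, B)
    (hBern : ∀ s ∈ 𝒮, 0 < μ {ω | S ω = s} →
      ∀ z : Fin n → Bool,
        ∀ A : Set ((Fin n → Bool) × (Fin n → Fin p → ℝ)), MeasurableSet A →
          μ[|{ω | S ω = s}] ({ω | Z ω = z} ∩ {ω | (C ω, B ω) ∈ A})
            = ENNReal.ofReal (∏ j, if z j then s else 1 - s)
              * μ[|{ω | S ω = s}] {ω | (C ω, B ω) ∈ A})
    (i : Fin n)
    (Dbar Cbar : Ω → ℝ)
    (hDbar : Dbar = fun ω =>
      (∑ j ∈ Finset.univ.erase i, (if C ω j && Z ω j then (1 : ℝ) else 0)) / ((n : ℝ) - 1))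
    (hCbar : Cbar = fun ω =>
      (∑ j ∈ Finset.univ.erase i, (if C ω j then (1 : ℝ) else 0)) / ((n : ℝ) - 1))
    (hCbarMeas : Measurable Cbar) :
    CondIndepFun (MeasurableSpace.comap Cbar inferInstance) hCbarMeas.comap_le
      (fun ω => (S ω, Z ω i, Dbar ω)) (fun ω => (B ω i, C ω i)) μ := by
  obtain rfl : Dbar = fun ω => looMean i fun j => C ω j && Z ω j := hDbar
  obtain rfl : Cbar = fun ω => looMean i (C ω) := hCbar
  change CondIndepFun _ _ (fun ω => offerSummary i (C ω) (S ω, Z ω)) _ μ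
  have hdesign : IsBernoulliDesign μ 𝒮 S Z (fun ω => (C ω, B ω)) := hBern
  have hind := hdesign.indepFun hSmeas hZmeas hSval hExcl
  have hexch := hdesign.measure_preimage_comp_perm hSmeas hZmeas hSval
  have hX : Measurable fun ω => offerSummary i (C ω) (S ω, Z ω) :=
    (measurable_from_prod_countable_right (f := fun q : (Fin n → Bool) × ℝ × (Fin n → Bool) =>
      offerSummary i q.1 q.2) (measurable_offerSummary i)).comp
        (hCmeas.prodMk (hSmeas.prodMk hZmeas))
  refine condIndepFun_comap_of_indepFun_cond hCbarMeas
    ((Set.countable_range (looMean i)).mono (Set.range_comp_subset_range C (looMean i))) hX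
    (by fun_prop) fun c hc => ?_
  obtain ⟨ω₀, rfl⟩ := nonempty_of_measure_ne_zero hc
  have := cond_isProbabilityMeasure hc
  refine indepFun_of_measure_inter_preimage_eq_mul_left
    (fun s => μ ((fun ω => (S ω, Z ω)) ⁻¹' (offerSummary i (C ω₀) ⁻¹' s))) fun s t hs ht => ?_
  rw [cond_apply (hCbarMeas (measurableSet_singleton _)),
    cond_apply (hCbarMeas (measurableSet_singleton _)),
    measure_looMean_fiber_inter hCmeas hn hind hexch i ω₀ hs ht, mul_left_comm]

/-- Under the randomized saturation design (Bernoulli offers independent of `(C, B)` given `S`),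
the exclusion restriction, one-sided non-compliance and IOR (`D_j = C_j Z_j`),
`(S, Z_i, D̄_i)` is conditionally independent of `(B_i, C_i)` given `C̄_i`. -/
theorem stmt5 {Ω : Type*} [MeasurableSpace Ω] [StandardBorelSpace Ω] [Nonempty Ω]
    (μ : Measure Ω) [IsProbabilityMeasure μ]
    (n : ℕ) (hn : 2 ≤ n) (p : ℕ)
    (𝒮 : Finset ℝ) (h𝒮 : ∀ s ∈ 𝒮, s ∈ Set.Icc (0 : ℝ) 1)
    (S : Ω → ℝ) (C Z : Ω → Fin n → Bool) (B : Ω → Fin n → Fin p → ℝ)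
    (hSmeas : Measurable S) (hCmeas : Measurable C)
    (hZmeas : Measurable Z) (hBmeas : Measurable B)
    (hSval : ∀ ω, S ω ∈ 𝒮)
    -- Exclusion: S independent of (C, B)
    (hExcl : IndepFun S (fun ω => (C ω, B ω)) μ)
    -- Bernoulli design with exclusion: conditionally on {S = s}, Z is product-Bernoulli(s)
    -- and independent of (C, B)
    (hBern : ∀ s ∈ 𝒮, 0 < μ {ω | S ω = s} →
      ∀ z : Fin n → Bool,
        ∀ A : Set ((Fin n → Bool) × (Fin n → Fin p → ℝ)), MeasurableSet A →
          μ[|{ω | S ω = s}] ({ω | Z ω = z} ∩ {ω | (C ω, B ω) ∈ A})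
            = ENNReal.ofReal (∏ j, if z j then s else 1 - s)
              * μ[|{ω | S ω = s}] {ω | (C ω, B ω) ∈ A})
    (i : Fin n)
    (Dbar Cbar : Ω → ℝ)
    (hDbar : Dbar = fun ω =>
      (∑ j ∈ Finset.univ.erase i, (if C ω j && Z ω j then (1 : ℝ) else 0)) / ((n : ℝ) - 1))
    (hCbar : Cbar = fun ω =>
      (∑ j ∈ Finset.univ.erase i, (if C ω j then (1 : ℝ) else 0)) / ((n : ℝ) - 1))
    (hCbarMeas : Measurable Cbar) :
    CondIndepFun (MeasurableSpace.comap Cbar inferInstance) hCbarMeas.comap_le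
      (fun ω => (S ω, Z ω i, Dbar ω)) (fun ω => (B ω i, C ω i)) μ :=
  stmt5_general μ n hn p 𝒮 S C Z B hSmeas hCmeas hZmeas hBmeas hSval hExcl hBern i Dbar Cbar hDbar
    hCbar hCbarMeas
end

section
/- Let 0 < s_L < s_H < 1, let c̄ ∈ (0, 1], and let n ≥ 2 be an integer. Then det Q₀(c̄, n) = (c̄²/4)·(1−s_L)(1−s_H)(s_H−s_L)² + (c̄/(4(n−1)))·[(1−s_L)+(1−s_H)]·[s_L(1−s_L)² + s_H(1−s_H)²] and det Q₁(c̄, n) = (c̄²/4)·s_L s_H (s_H−s_L)² + (c̄/(4(n−1)))·(s_L + s_H)·[s_L²(1−s_L) + s_H²(1−s_H)]. Both determinants are strictly positive, so Q₀(c̄, n) and Q₁(c̄, n) are invertible. -/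
/-!
With weight `w(s) = 1 - s` for `Q₀` and `w(s) = s` for `Q₁`, both matrices read
`!![m₀, c m₁; c m₁, c² m₂ + d]` with moments `mₖ = E[w(S) Sᵏ]`, so their determinant is
`c² (m₀ m₂ - m₁²) + m₀ d`. For a two-point law, Lagrange's identity turns the Gram determinant
`m₀ m₂ - m₁²` into `w(s_L) w(s_H) (s_H - s_L)² / 4`; every factor is then positive.
-/

open Matrix

theorem det_fin_two_of_moments {R : Type*} [CommRing R] (m₀ m₁ m₂ c d : R) :
    !![m₀, c * m₁; c * m₁, c ^ 2 * m₂ + d].det = c ^ 2 * (m₀ * m₂ - m₁ ^ 2) + m₀ * d := by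
  rw [det_fin_two_of]; ring

theorem weighted_lagrange_two {R : Type*} [CommRing R] (a b x y : R) :
    (a + b) * (a * x ^ 2 + b * y ^ 2) - (a * x + b * y) ^ 2 = a * b * (y - x) ^ 2 := by
  ring

/-- For a design with two equally likely interior saturations `0 < s_L < s_H < 1`,
explicit determinant formulas for `Q₀(c̄, n)` and `Q₁(c̄, n)`; both determinants are
strictly positive, hence both matrices are invertible. -/
theorem stmt12 (sL sH : ℝ) (hL0 : 0 < sL) (hLH : sL < sH) (hH1 : sH < 1)
    (cbar : ℝ) (hcbar : cbar ∈ Set.Ioc (0 : ℝ) 1) (n : ℕ) (hn : 2 ≤ n) :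
    let E : (ℝ → ℝ) → ℝ := fun g => (g sL + g sH) / 2
    let Q₀ : Matrix (Fin 2) (Fin 2) ℝ :=
      !![E (fun s => 1 - s), cbar * E (fun s => s * (1 - s));
         cbar * E (fun s => s * (1 - s)),
         cbar ^ 2 * E (fun s => s ^ 2 * (1 - s))
           + (cbar / ((n : ℝ) - 1)) * E (fun s => s * (1 - s) ^ 2)]
    let Q₁ : Matrix (Fin 2) (Fin 2) ℝ :=
      !![E (fun s => s), cbar * E (fun s => s ^ 2);
         cbar * E (fun s => s ^ 2),
         cbar ^ 2 * E (fun s => s ^ 3)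
           + (cbar / ((n : ℝ) - 1)) * E (fun s => s ^ 2 * (1 - s))]
    Q₀.det = (cbar ^ 2 / 4) * (1 - sL) * (1 - sH) * (sH - sL) ^ 2
        + (cbar / (4 * ((n : ℝ) - 1))) * ((1 - sL) + (1 - sH))
            * (sL * (1 - sL) ^ 2 + sH * (1 - sH) ^ 2) ∧
    Q₁.det = (cbar ^ 2 / 4) * sL * sH * (sH - sL) ^ 2
        + (cbar / (4 * ((n : ℝ) - 1))) * (sL + sH)
            * (sL ^ 2 * (1 - sL) + sH ^ 2 * (1 - sH)) ∧
    0 < Q₀.det ∧ 0 < Q₁.det ∧ IsUnit Q₀ ∧ IsUnit Q₁ := by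
  intro E Q₀ Q₁
  have hm : 0 < (n : ℝ) - 1 := by
    have : (2 : ℝ) ≤ n := by exact_mod_cast hn
    linarith
  have hdet₀ : Q₀.det = (cbar ^ 2 / 4) * (1 - sL) * (1 - sH) * (sH - sL) ^ 2
      + (cbar / (4 * ((n : ℝ) - 1))) * ((1 - sL) + (1 - sH))
          * (sL * (1 - sL) ^ 2 + sH * (1 - sH) ^ 2) := by
    -- split `cbar / (4 * (n - 1))` so that `ring` treats `(n - 1)⁻¹` as an atom
    simp only [Q₀, det_fin_two_of_moments, E, div_mul_eq_div_div_swap]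
    linear_combination cbar ^ 2 / 4 * weighted_lagrange_two (1 - sL) (1 - sH) sL sH
  have hdet₁ : Q₁.det = (cbar ^ 2 / 4) * sL * sH * (sH - sL) ^ 2
      + (cbar / (4 * ((n : ℝ) - 1))) * (sL + sH)
          * (sL ^ 2 * (1 - sL) + sH ^ 2 * (1 - sH)) := by
    simp only [Q₁, det_fin_two_of_moments, E, div_mul_eq_div_div_swap]
    linear_combination cbar ^ 2 / 4 * weighted_lagrange_two sL sH sL sH
  have hcbar₀ : 0 < cbar := hcbar.1
  have hL1 : 0 < 1 - sL := by linarith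
  have hH1' : 0 < 1 - sH := by linarith
  have hH0 : 0 < sH := by linarith
  have hpos₀ : 0 < Q₀.det := hdet₀ ▸ by positivity
  have hpos₁ : 0 < Q₁.det := hdet₁ ▸ by positivity
  exact ⟨hdet₀, hdet₁, hpos₀, hpos₁, (isUnit_iff_isUnit_det _).mpr hpos₀.ne'.isUnit,
    (isUnit_iff_isUnit_det _).mpr hpos₁.ne'.isUnit⟩
end

section
/- Let n ≥ 2 be an integer, let z, c ∈ {0,1}^n, and set d_j := c_j·z_j for each j. Let s̲ ∈ (0, 1] satisfy s̲·n > 2 and suppose z̄ := (1/n)·Σ_{j=1}^n z_j ≥ s̲/2 (so that Σ_j z_j ≥ 2 and, for every i, Σ_{j≠i} z_j > 0). Define Ĉ := (Σ_j d_j)/(Σ_j z_j), C̄ := (1/n)·Σ_j c_j, and for each i ∈ {1,…,n}: Ĉ_i := (Σ_{j≠i} d_j)/(Σ_{j≠i} z_j) and C̄_i := (1/(n−1))·Σ_{j≠i} c_j. Then max_{1≤i≤n} |Ĉ_i − C̄_i| ≤ (s̲n/(s̲n−2))²·|Ĉ − C̄| + [(s̲n/(s̲n−2))² + 1]·4/(s̲n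 − 2). -/
/-!
Removing individual `i` changes a ratio `X / Y` of counts (with `0 ≤ X ≤ Y`) into
`(X - d) / (Y - e)` with `0 ≤ d ≤ e ≤ 1`, which moves it by at most `1 / (Y - 1)`.
For `Ĉ` the denominator is `∑ z ≥ s̲n/2`, for `C̄` it is `n ≥ s̲n`, so both moves are at most
`2 / (s̲n - 2)`, and the triangle inequality through `Ĉ - C̄` gives the bound; the factor
`(s̲n/(s̲n-2))² ≥ 1` is then only a weakening.
-/

open Finset

section Boole

variable {R : Type*} [Semiring R] [PartialOrder R] [IsOrderedRing R]

theorem boole_nonneg (b : Bool) : 0 ≤ (if b then (1 : R) else 0) := by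
  cases b <;> simp

theorem boole_le_one (b : Bool) : (if b then (1 : R) else 0) ≤ 1 := by
  cases b <;> simp

theorem boole_and_le_right (b b' : Bool) :
    (if b && b' then (1 : R) else 0) ≤ if b' then 1 else 0 := by
  cases b <;> cases b' <;> simp

end Boole

theorem abs_sub_div_sub_sub_div_le {X Y d e : ℝ} (hX : 0 ≤ X) (hXY : X ≤ Y) (hd : 0 ≤ d)
    (hde : d ≤ e) (he : e ≤ 1) (hY : 1 < Y) :
    |(X - d) / (Y - e) - X / Y| ≤ 1 / (Y - 1) := by
  have hYe : 0 < Y - e := by linarith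
  have hY0 : 0 < Y := by linarith
  have hnum : |e * X - d * Y| ≤ Y := abs_le.2 ⟨by nlinarith, by nlinarith⟩
  calc |(X - d) / (Y - e) - X / Y| = |e * X - d * Y| / ((Y - e) * Y) := by
        rw [div_sub_div _ _ hYe.ne' hY0.ne', abs_div, abs_of_pos (mul_pos hYe hY0)]
        ring_nf
    _ ≤ Y / ((Y - e) * Y) := by gcongr
    _ = 1 / (Y - e) := by field_simp
    _ ≤ 1 / (Y - 1) := by gcongr

theorem one_div_sub_one_le_two_div_sub_two {s Y : ℝ} (hs : 2 < s) (hY : s / 2 ≤ Y) :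
    1 / (Y - 1) ≤ 2 / (s - 2) := by
  rw [div_le_div_iff₀ (by linarith) (by linarith)]
  linarith

theorem abs_sub_le_abs_sub_add_two_mul {a b p q ε : ℝ} (ha : |a - p| ≤ ε) (hb : |b - q| ≤ ε) :
    |a - b| ≤ |p - q| + 2 * ε := by
  calc |a - b| = |(a - p) + (p - q) - (b - q)| := by ring_nf
    _ ≤ |a - p| + |p - q| + |b - q| := by
        refine (abs_sub _ _).trans ?_
        gcongr
        exact abs_add_le _ _
    _ ≤ |p - q| + 2 * ε := by linarith

theorem stmt17_general (n : ℕ) (z c : Fin n → Bool)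
    (slb : ℝ) (hslb1 : slb ≤ 1) (hsn : 2 < slb * n)
    (hzbar : slb / 2 ≤ (∑ j, if z j then (1 : ℝ) else 0) / (n : ℝ)) :
    ∀ i : Fin n,
      |(∑ j ∈ Finset.univ.erase i, if c j && z j then (1 : ℝ) else 0)
            / (∑ j ∈ Finset.univ.erase i, if z j then (1 : ℝ) else 0)
          - (∑ j ∈ Finset.univ.erase i, if c j then (1 : ℝ) else 0) / ((n : ℝ) - 1)|
        ≤ (slb * n / (slb * n - 2)) ^ 2 *
            |(∑ j, if c j && z j then (1 : ℝ) else 0) / (∑ j, if z j then (1 : ℝ) else 0)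
              - (∑ j, if c j then (1 : ℝ) else 0) / (n : ℝ)|
          + ((slb * n / (slb * n - 2)) ^ 2 + 1) * (4 / (slb * n - 2)) := by
  intro i
  simp only [sum_erase_eq_sub (mem_univ i)]
  set Z : ℝ := ∑ j, if z j then (1 : ℝ) else 0
  set D : ℝ := ∑ j, if c j && z j then (1 : ℝ) else 0
  set C : ℝ := ∑ j, if c j then (1 : ℝ) else 0
  have hsn2 : 0 < slb * n - 2 := by linarith
  have hn : slb * n ≤ n := by nlinarith
  have hZ : slb * n / 2 ≤ Z := by
    rw [div_le_div_iff₀ two_pos (by linarith)] at hzbar; linarith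
  have hDZ : D ≤ Z := sum_le_sum fun j _ => boole_and_le_right _ _
  have hCn : C ≤ n := (sum_le_card_nsmul _ _ 1 fun j _ => boole_le_one _).trans (by simp)
  have hChat := (abs_sub_div_sub_sub_div_le (sum_nonneg fun j _ => boole_nonneg _) hDZ
    (boole_nonneg _) (boole_and_le_right (c i) (z i)) (boole_le_one _) (by linarith)).trans
    (one_div_sub_one_le_two_div_sub_two hsn hZ)
  have hCbar := (abs_sub_div_sub_sub_div_le (sum_nonneg fun j _ => boole_nonneg _) hCn
    (boole_nonneg (c i)) (boole_le_one _) le_rfl (by linarith)).trans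
    (one_div_sub_one_le_two_div_sub_two hsn (by linarith))
  have hK : 1 ≤ (slb * n / (slb * n - 2)) ^ 2 :=
    one_le_pow₀ ((one_le_div hsn2).2 (by linarith))
  have h4 : 4 / (slb * n - 2) = 2 * (2 / (slb * n - 2)) := by ring
  rw [h4]
  nlinarith [abs_sub_le_abs_sub_add_two_mul hChat hCbar, abs_nonneg (D / Z - C / n),
    show 0 ≤ 2 / (slb * n - 2) by positivity]

/-- Deterministic bound: the leave-one-out estimated complier shares are uniformly close to
the leave-one-out complier shares in terms of the full-group quantities. -/
theorem stmt17 (n : ℕ) (hn : 2 ≤ n) (z c : Fin n → Bool)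
    (slb : ℝ) (hslb0 : 0 < slb) (hslb1 : slb ≤ 1) (hsn : 2 < slb * n)
    (hzbar : slb / 2 ≤ (∑ j, if z j then (1 : ℝ) else 0) / (n : ℝ)) :
    ∀ i : Fin n,
      |(∑ j ∈ Finset.univ.erase i, if c j && z j then (1 : ℝ) else 0)
            / (∑ j ∈ Finset.univ.erase i, if z j then (1 : ℝ) else 0)
          - (∑ j ∈ Finset.univ.erase i, if c j then (1 : ℝ) else 0) / ((n : ℝ) - 1)|
        ≤ (slb * n / (slb * n - 2)) ^ 2 *
            |(∑ j, if c j && z j then (1 : ℝ) else 0) / (∑ j, if z j then (1 : ℝ) else 0)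
              - (∑ j, if c j then (1 : ℝ) else 0) / (n : ℝ)|
          + ((slb * n / (slb * n - 2)) ^ 2 + 1) * (4 / (slb * n - 2)) :=
  stmt17_general n z c slb hslb1 hsn hzbar
end

section
/- Suppose every group saturation satisfies S_g ≥ s̲ almost surely, where s̲ ∈ (0, 1] and s̲·n̲ > 2 with n̲ ≤ n_g for all g. Define h*(x, t) := ((x−2)/x)⁴·t² − 16·t/(x−2). Then for every t with 0 < t < 1, P(max_{1≤g≤G} max_{1≤i≤n_g} |Ĉ_{ig} − C̄_{ig}| > t) ≤ 3·G·exp(−n̲·s̲²·h*(s̲n̲, t)/2). -/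
/-!
Fix a group and condition on its saturation `s` and compliance vector `c`: by the Bernoulli
design the offers are then i.i.d. Bernoulli(`s`). Writing `M` for the number of treated members
and `W := ∑ⱼ (cⱼ - c̄) zⱼ` (with `c̄` the complier share of the whole group), elementary algebra
gives `|Ĉᵢ - C̄ᵢ| ≤ (|W| + 1) / M + 1 / n` for every member `i`. Hoeffding's inequality bounds
the probabilities of `M ≤ 2ns/5`, `W ≥ τ` and `-W ≥ τ` (with `τ` of order `tns`) by
`exp (-n s² t² / 2)` each, and off these three events every `|Ĉᵢ - C̄ᵢ|` is at most `t`.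
If `h*(s̲n̲, t) > 0` then `t s̲n̲ > 16` and `h* ≤ t²`, so this exponent is at least the one in the
claim; otherwise the claimed bound exceeds one. A union bound over the groups concludes.
-/

open MeasureTheory ProbabilityTheory Finset Real unitInterval

noncomputable def bernoulliPi (n : ℕ) (p : I) : Measure (Fin n → Bool) :=
  Measure.pi fun _ ↦ bernoulliMeasure true false p

instance (n : ℕ) (p : I) : IsProbabilityMeasure (bernoulliPi n p) := by
  unfold bernoulliPi; infer_instance

lemma bernoulliPi_real_singleton {n : ℕ} (p : I) (z : Fin n → Bool) :
    (bernoulliPi n p).real {z} = ∏ j, if z j then (p : ℝ) else 1 - p := by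
  rw [measureReal_def, bernoulliPi, Measure.pi_singleton, ENNReal.toReal_prod]
  refine Finset.prod_congr rfl fun j _ ↦ ?_
  cases z j <;> simp

lemma ProbabilityTheory.HasSubgaussianMGF.mono {Ω : Type*} {m : MeasurableSpace Ω} {μ : Measure Ω}
    {X : Ω → ℝ} {c c' : NNReal} (h : HasSubgaussianMGF X c μ) (hc : c ≤ c') :
    HasSubgaussianMGF X c' μ :=
  ⟨h.integrable_exp_mul, fun t ↦ (h.mgf_le t).trans (exp_le_exp.2 (by gcongr))⟩

lemma hasSubgaussianMGF_bernoulliMeasure (p : I) (d : ℝ) :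
    HasSubgaussianMGF (fun b : Bool ↦ d * ((if b then 1 else 0) - p)) ((‖d‖₊ / 2) ^ 2)
      (bernoulliMeasure true false p) := by
  have h := hasSubgaussianMGF_of_mem_Icc (μ := bernoulliMeasure true false p)
    (X := fun b : Bool ↦ d * (if b then 1 else 0)) (a := min 0 d) (b := max 0 d)
    (by fun_prop) (ae_of_all _ fun b ↦ by cases b <;> simp)
  rw [integral_bernoulliMeasure, max_sub_min_eq_abs, nnnorm_abs, sub_zero] at h
  exact h.congr (ae_of_all _ fun b ↦ by cases b <;> simp <;> ring)

lemma bernoulliPi_real_sum_ge_le {n : ℕ} (p : I) (d : Fin n → ℝ) {ε V : ℝ} (hε : 0 ≤ ε)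
    (hV : ∑ j, d j ^ 2 ≤ V) :
    (bernoulliPi n p).real {z | ε ≤ ∑ j, d j * ((if z j then 1 else 0) - p)} ≤
      exp (-(2 * ε ^ 2 / V)) := by
  have hV0 : 0 ≤ V := (sum_nonneg fun j _ ↦ sq_nonneg (d j)).trans hV
  set X : Fin n → Bool → ℝ := fun j b ↦ d j * ((if b then 1 else 0) - p)
  have hX (j : Fin n) : HasSubgaussianMGF (fun z : Fin n → Bool ↦ X j (z j)) ((‖d j‖₊ / 2) ^ 2)
      (bernoulliPi n p) := by
    refine HasSubgaussianMGF.of_map (X := X j) (Y := fun z : Fin n → Bool ↦ z j)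
      (measurable_pi_apply j).aemeasurable ?_
    rw [bernoulliPi, (measurePreserving_eval _ j).map_eq]
    exact hasSubgaussianMGF_bernoulliMeasure p (d j)
  have hsum := HasSubgaussianMGF.sum_of_iIndepFun (s := univ)
    (iIndepFun_pi (X := X) fun _ ↦ by fun_prop) fun j _ ↦ hX j
  have hle : ∑ j, (‖d j‖₊ / 2) ^ 2 ≤ (V / 4).toNNReal := by
    rw [← NNReal.coe_le_coe, Real.coe_toNNReal _ (by positivity)]
    push_cast
    simp only [div_pow, norm_eq_abs, sq_abs, ← sum_div]
    linarith
  refine ((hsum.mono hle).measure_ge_le hε).trans_eq ?_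
  rw [Real.coe_toNNReal _ (by positivity)]
  ring_nf

-- The leave-one-out shares `Ĉᵢ` and `C̄ᵢ` of a group with compliance `c` and offers `z`.
noncomputable def looComplierShareHat {n : ℕ} (c z : Fin n → Bool) (i : Fin n) : ℝ :=
  if 0 < (∑ j ∈ univ.erase i, if z j then (1 : ℕ) else 0) then
    (∑ j ∈ univ.erase i, if c j && z j then (1 : ℝ) else 0)
      / (∑ j ∈ univ.erase i, if z j then (1 : ℝ) else 0)
  else 0

noncomputable def looComplierShare {n : ℕ} (c : Fin n → Bool) (i : Fin n) : ℝ :=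
  (∑ j ∈ univ.erase i, if c j then (1 : ℝ) else 0) / ((n : ℝ) - 1)

lemma abs_div_sub_add_div_add_le {K M f g : ℝ} (hK : 0 ≤ K) (hKM : K ≤ M) (hM : 0 < M)
    (hf : 0 ≤ f) (hf1 : f ≤ 1) (hg : 0 ≤ g) (hg1 : g ≤ 1) :
    |K / M - (K + g) / (M + f)| ≤ 1 / (M + f) := by
  have hMf : 0 < M + f := by linarith
  have : K / M - (K + g) / (M + f) = (K * f - g * M) / M / (M + f) := by
    field_simp; ring
  rw [this, abs_div, abs_of_pos hMf, div_le_div_iff_of_pos_right hMf, abs_div, abs_of_pos hM,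
    div_le_one hM, abs_le]
  constructor <;> nlinarith

lemma sum_ite_le_card {ι : Type*} (s : Finset ι) (b : ι → Bool) :
    ∑ j ∈ s, (if b j then (1 : ℝ) else 0) ≤ #s := by
  rw [Finset.sum_boole]
  exact_mod_cast card_filter_le s _

lemma looComplierShareHat_eq_div {n : ℕ} (c z : Fin n → Bool) (i : Fin n)
    (h : 0 < ∑ j ∈ univ.erase i, if z j then (1 : ℝ) else 0) :
    looComplierShareHat c z i = (∑ j ∈ univ.erase i, if c j && z j then (1 : ℝ) else 0) /
      ∑ j ∈ univ.erase i, if z j then (1 : ℝ) else 0 := by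
  rw [looComplierShareHat, if_pos]
  have : (0 : ℝ) < ((∑ j ∈ univ.erase i, if z j then (1 : ℕ) else 0 : ℕ) : ℝ) := by
    push_cast; exact h
  exact_mod_cast this

lemma abs_looComplierShare_sub_le {n : ℕ} (hn : (2 : ℝ) ≤ n) (c : Fin n → Bool) (i : Fin n) :
    |looComplierShare c i - (∑ j, if c j then (1 : ℝ) else 0) / n| ≤ 1 / n := by
  have hle : ∑ j ∈ univ.erase i, (if c j then (1 : ℝ) else 0) ≤ n - 1 := by
    refine (sum_ite_le_card _ c).trans_eq ?_
    rw [card_erase_of_mem (mem_univ i), card_univ, Fintype.card_fin,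
      Nat.cast_pred (by exact_mod_cast (by linarith : (0 : ℝ) < n))]
  have := abs_div_sub_add_div_add_le (g := if c i then 1 else 0)
    (sum_nonneg fun j _ ↦ by positivity) hle (by linarith) zero_le_one le_rfl (by positivity)
    (by split_ifs <;> norm_num)
  rwa [sub_add_cancel, sum_erase_add _ _ (mem_univ i)] at this

lemma abs_looComplierShareHat_sub_looComplierShare_le {n : ℕ} (c z : Fin n → Bool) (i : Fin n)
    (hM : 2 ≤ ∑ j, if z j then (1 : ℝ) else 0) :
    |looComplierShareHat c z i - looComplierShare c i| ≤
      (|∑ j, ((if c j then 1 else 0) - (∑ k, if c k then 1 else 0) / (n : ℝ)) *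
          (if z j then 1 else 0)| + 1) / (∑ j, if z j then (1 : ℝ) else 0) + 1 / (n : ℝ) := by
  set M := ∑ j, if z j then (1 : ℝ) else 0
  set Nc := ∑ j, if c j then (1 : ℝ) else 0
  set K := ∑ j, if c j && z j then (1 : ℝ) else 0
  set K' := ∑ j ∈ univ.erase i, if c j && z j then (1 : ℝ) else 0
  set M' := ∑ j ∈ univ.erase i, if z j then (1 : ℝ) else 0
  have hn : (2 : ℝ) ≤ n := hM.trans ((sum_ite_le_card univ z).trans_eq (by simp))
  have hM' : M = M' + if z i then 1 else 0 := (sum_erase_add _ _ (mem_univ i)).symm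
  have hK' : K = K' + if c i && z i then 1 else 0 := (sum_erase_add _ _ (mem_univ i)).symm
  have hM'pos : 0 < M' := by rw [hM'] at hM; split_ifs at hM <;> linarith
  have hK'M' : K' ≤ M' := sum_le_sum fun j _ ↦ by cases c j <;> cases z j <;> simp
  have hW : ∑ j, ((if c j then 1 else 0) - Nc / n) * (if z j then 1 else 0) = K - Nc / n * M := by
    simp only [K, M, sub_mul, sum_sub_distrib, ← mul_sum]
    congr 1
    exact sum_congr rfl fun j _ ↦ by cases c j <;> cases z j <;> simp
  have hhat : |K' / M' - K / M| ≤ 1 / M := by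
    rw [hK', hM']
    exact abs_div_sub_add_div_add_le (sum_nonneg fun j _ ↦ by positivity) hK'M' hM'pos
      (by positivity) (by split_ifs <;> norm_num) (by positivity) (by split_ifs <;> norm_num)
  have hmid : K / M - Nc / n = (K - Nc / n * M) / M := by field_simp
  rw [looComplierShareHat_eq_div c z i hM'pos, hW]
  calc |K' / M' - looComplierShare c i|
      ≤ |K' / M' - K / M| + |K / M - Nc / n| + |looComplierShare c i - Nc / n| := by
        linarith [abs_sub_le (K' / M') (K / M) (looComplierShare c i),
          abs_sub_le (K / M) (Nc / n) (looComplierShare c i),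
          abs_sub_comm (Nc / n) (looComplierShare c i)]
    _ ≤ 1 / M + |K - Nc / n * M| / M + 1 / n := by
        rw [hmid, abs_div, abs_of_pos (by linarith : 0 < M)]
        gcongr
        exact abs_looComplierShare_sub_le hn c i
    _ = (|K - Nc / n * M| + 1) / M + 1 / n := by ring

lemma sum_sq_sub_mean_le {n : ℕ} (x : Fin n → ℝ) (hx : ∀ j, x j ∈ Set.Icc (0 : ℝ) 1) :
    ∑ j, (x j - (∑ k, x k) / n) ^ 2 ≤ n / 4 := by
  rcases Nat.eq_zero_or_pos n with rfl | hn
  · simp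
  have hn' : (0 : ℝ) < n := by exact_mod_cast hn
  set S := ∑ k, x k
  have hsq : ∑ j, x j ^ 2 ≤ S := sum_le_sum fun j _ ↦ by nlinarith [(hx j).1, (hx j).2]
  have hexp : ∑ j, (x j - S / n) ^ 2 = ∑ j, x j ^ 2 - S ^ 2 / n := by
    simp only [sub_sq, sum_add_distrib, sum_sub_distrib, ← sum_mul, ← mul_sum, sum_const,
      card_univ, Fintype.card_fin, nsmul_eq_mul]
    field_simp
    ring
  rw [hexp]
  have : S - S ^ 2 / n ≤ n / 4 := by
    rw [← sub_nonneg]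
    have : n / 4 - (S - S ^ 2 / n) = (n - 2 * S) ^ 2 / (4 * n) := by field_simp; ring
    rw [this]; positivity
  linarith

lemma bernoulliPi_real_sum_le_sub_le {n : ℕ} (p : I) {ε : ℝ} (hε : 0 ≤ ε) :
    (bernoulliPi n p).real {z | ∑ j, (if z j then (1 : ℝ) else 0) ≤ n * p - ε} ≤
      exp (-(2 * ε ^ 2 / n)) := by
  refine le_trans (measureReal_mono fun z hz ↦ ?_)
    (bernoulliPi_real_sum_ge_le p (fun _ ↦ -1) hε (V := n) (by simp))
  simp only [Set.mem_ofPred_eq, neg_one_mul, neg_sub, sum_sub_distrib, sum_const, card_univ,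
    Fintype.card_fin, nsmul_eq_mul] at hz ⊢
  linarith

lemma bernoulliPi_real_le_abs_sum_le {n : ℕ} (p : I) {d : Fin n → ℝ} (hd : ∑ j, d j = 0)
    {ε V : ℝ} (hε : 0 ≤ ε) (hV : ∑ j, d j ^ 2 ≤ V) :
    (bernoulliPi n p).real {z | ε ≤ |∑ j, d j * (if z j then 1 else 0)|} ≤
      2 * exp (-(2 * ε ^ 2 / V)) := by
  have hcentre (e : Fin n → ℝ) (z : Fin n → Bool) : ∑ j, e j * ((if z j then 1 else 0) - p) =
      ∑ j, e j * (if z j then 1 else 0) - (∑ j, e j) * p := by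
    simp only [mul_sub, sum_sub_distrib, sum_mul]
  have hsub : {z : Fin n → Bool | ε ≤ |∑ j, d j * (if z j then 1 else 0)|} ⊆
      {z | ε ≤ ∑ j, d j * ((if z j then 1 else 0) - p)} ∪
        {z | ε ≤ ∑ j, (-d) j * ((if z j then 1 else 0) - p)} := by
    intro z hz
    simp only [Set.mem_union, Set.mem_ofPred_eq, hcentre, hd, Pi.neg_apply, neg_mul,
      sum_neg_distrib, zero_mul, sub_zero, le_abs'] at hz ⊢
    rcases hz with hz | hz
    · exact Or.inr (by linarith)
    · exact Or.inl hz
  calc _ ≤ _ := measureReal_mono hsub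
    _ ≤ _ := measureReal_union_le _ _
    _ ≤ _ := add_le_add (bernoulliPi_real_sum_ge_le p d hε hV)
        (bernoulliPi_real_sum_ge_le p (-d) hε (by simpa using hV))
    _ = _ := by ring

lemma abs_looComplierShareHat_sub_looComplierShare_lt {n : ℕ} (c z : Fin n → Bool) (i : Fin n)
    {m t : ℝ} (hm : 2 ≤ m) (hM : m < ∑ j, if z j then (1 : ℝ) else 0)
    (hW : |∑ j, ((if c j then 1 else 0) - (∑ k, if c k then 1 else 0) / (n : ℝ)) *
          (if z j then 1 else 0)| < m * (t - 1 / n) - 1) :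
    |looComplierShareHat c z i - looComplierShare c i| < t := by
  set W := ∑ j, ((if c j then 1 else 0) - (∑ k, if c k then 1 else 0) / (n : ℝ)) *
    (if z j then 1 else 0)
  have hWM : (|W| + 1) / (∑ j, if z j then (1 : ℝ) else 0) < t - 1 / n := by
    rw [div_lt_iff₀ (by linarith)]
    nlinarith [abs_nonneg W]
  linarith [abs_looComplierShareHat_sub_looComplierShare_le c z i (by linarith)]

lemma bernoulliPi_real_exists_abs_sub_gt_le {n : ℕ} (p : I) (c : Fin n → Bool) {t : ℝ}
    (ht : t ≤ 1) (htn : 10 ≤ t * (n * p)) :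
    (bernoulliPi n p).real {z | ∃ i, t < |looComplierShareHat c z i - looComplierShare c i|} ≤
      3 * exp (-(n * p ^ 2 * t ^ 2 / 2)) := by
  set y : ℝ := n * p with hy
  set Nc := ∑ k, if c k then (1 : ℝ) else 0
  set d : Fin n → ℝ := fun j ↦ (if c j then 1 else 0) - Nc / n
  -- with `M > 2y/5`, `|W| < τ` forces `|Ĉᵢ - C̄ᵢ| < t` (the `_lt` lemma above with `m = 2y/5`)
  set τ := 2 / 5 * y * (t - 1 / n) - 1 with hτ
  have ht0 : 0 < t := by nlinarith [mul_nonneg n.cast_nonneg p.2.1]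
  have hyn : y ≤ n := mul_le_of_le_one_right n.cast_nonneg p.2.2
  have hy10 : 10 ≤ y := by nlinarith
  have hn : (10 : ℝ) ≤ n := by linarith
  have hτy : t * y / 4 ≤ τ := by
    have : 2 / 5 * y * (1 / n) = 2 / 5 * p := by rw [hy]; field_simp
    rw [hτ]
    nlinarith [p.2.2]
  have hd : ∑ j, d j = 0 := by
    simp only [d, sum_sub_distrib, sum_const, card_univ, Fintype.card_fin, nsmul_eq_mul]
    field_simp
    ring
  have hsub : {z | ∃ i, t < |looComplierShareHat c z i - looComplierShare c i|} ⊆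
      {z | ∑ j, (if z j then (1 : ℝ) else 0) ≤ y - 3 / 5 * y} ∪
        {z | τ ≤ |∑ j, d j * (if z j then 1 else 0)|} := by
    rintro z ⟨i, hi⟩
    by_contra hz
    simp only [Set.mem_union, Set.mem_ofPred_eq, not_or, not_le] at hz
    exact hi.not_gt (abs_looComplierShareHat_sub_looComplierShare_lt c z i (by linarith)
      (by linarith) hz.2)
  have hfew := bernoulliPi_real_sum_le_sub_le (n := n) p (ε := 3 / 5 * y) (by positivity)
  have hdev := bernoulliPi_real_le_abs_sum_le p hd (ε := τ) (by nlinarith)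
    (sum_sq_sub_mean_le _ fun j ↦
      show (if c j then (1 : ℝ) else 0) ∈ Set.Icc 0 1 by constructor <;> split_ifs <;> norm_num)
  have hfew' : exp (-(2 * (3 / 5 * y) ^ 2 / n)) ≤ exp (-(n * p ^ 2 * t ^ 2 / 2)) := by
    refine exp_le_exp.2 (neg_le_neg ?_)
    rw [le_div_iff₀ (by positivity), hy]
    nlinarith [mul_nonneg (sq_nonneg y) (sub_nonneg.2 (pow_le_one₀ ht0.le ht (n := 2)))]
  have hdev' : exp (-(2 * τ ^ 2 / (n / 4))) ≤ exp (-(n * p ^ 2 * t ^ 2 / 2)) := by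
    refine exp_le_exp.2 (neg_le_neg ?_)
    have := mul_le_mul hτy hτy (by positivity) (by linarith)
    rw [le_div_iff₀ (by positivity)]
    rw [hy] at this
    nlinarith
  calc _ ≤ _ := measureReal_mono hsub
    _ ≤ _ := measureReal_union_le _ _
    _ ≤ _ := by linarith

lemma map_cond_eq_bernoulliPi {Ω : Type*} [MeasurableSpace Ω] {μ : Measure Ω} [IsFiniteMeasure μ]
    {n : ℕ} {Z : Ω → Fin n → Bool} (hZ : Measurable Z) {B : Set Ω} (p : I)
    (h : ∀ z, (μ[{ω | Z ω = z} | B]).toReal = ∏ j, if z j then (p : ℝ) else 1 - p) :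
    μ[|B].map Z = bernoulliPi n p := by
  refine Measure.ext_iff_singleton.2 fun z ↦ ?_
  rw [Measure.map_apply hZ (measurableSet_singleton z), ← ENNReal.toReal_eq_toReal_iff' (by simp)
    (by simp), ← measureReal_def (bernoulliPi n p), bernoulliPi_real_singleton]
  exact h z

lemma measure_le_of_forall_cond_le {Ω α : Type*} [MeasurableSpace Ω] [MeasurableSpace α]
    [Fintype α] [DiscreteMeasurableSpace α] {μ : Measure Ω} [IsProbabilityMeasure μ]
    {X : Ω → α} (hX : Measurable X) {A : Set Ω} {b : ENNReal}
    (h : ∀ x, μ (X ⁻¹' {x}) ≠ 0 → μ[A | X ⁻¹' {x}] ≤ b) : μ A ≤ b := by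
  calc μ A = ∑ x, μ (X ⁻¹' {x}) * μ[A | X ⁻¹' {x}] := by
        conv_lhs => rw [← sum_meas_smul_cond_fiber hX μ]
        simp only [Measure.coe_finsetSum, Measure.coe_smul, Finset.sum_apply, Pi.smul_apply,
          smul_eq_mul]
    _ ≤ ∑ x, μ (X ⁻¹' {x}) * b := by
        refine sum_le_sum fun x _ ↦ ?_
        by_cases hx : μ (X ⁻¹' {x}) = 0
        · simp [hx]
        · gcongr; exact h x hx
    _ = b := by
        rw [← sum_mul, sum_measure_preimage_singleton _ fun x _ ↦ hX (measurableSet_singleton x)]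
        simp

lemma measure_exists_abs_looComplierShareHat_sub_gt_le {Ω : Type*} [MeasurableSpace Ω]
    {μ : Measure Ω} [IsProbabilityMeasure μ] {n : ℕ} {𝒮 : Finset ℝ}
    (h𝒮 : ∀ s ∈ 𝒮, s ∈ Set.Icc (0 : ℝ) 1) {S : Ω → ℝ} (hS : Measurable S) (hSval : ∀ ω, S ω ∈ 𝒮)
    {C Z : Ω → Fin n → Bool} (hC : Measurable C) (hZ : Measurable Z)
    (hBern : ∀ s ∈ 𝒮, ∀ c : Fin n → Bool, 0 < μ {ω | S ω = s ∧ C ω = c} → ∀ z : Fin n → Bool,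
      (μ[|{ω | S ω = s ∧ C ω = c}] {ω | Z ω = z}).toReal = ∏ j, (if z j then s else 1 - s))
    {slb t : ℝ} (hslb : 0 ≤ slb) (hSlb : ∀ᵐ ω ∂μ, slb ≤ S ω) (ht : t ≤ 1)
    (htn : 10 ≤ t * (n * slb)) :
    μ {ω | ∃ i, t < |looComplierShareHat (C ω) (Z ω) i - looComplierShare (C ω) i|} ≤
      ENNReal.ofReal (3 * exp (-(n * slb ^ 2 * t ^ 2 / 2))) := by
  set Bad : (Fin n → Bool) → Set (Fin n → Bool) :=
    fun c : Fin n → Bool ↦ {z | ∃ i, t < |looComplierShareHat c z i - looComplierShare c i|}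
  have hX : Measurable fun ω ↦ ((⟨S ω, hSval ω⟩ : 𝒮), C ω) := hS.subtype_mk.prodMk hC
  refine measure_le_of_forall_cond_le hX fun ⟨⟨s, hs⟩, c⟩ hF ↦ ?_
  have hfib : (fun ω ↦ ((⟨S ω, hSval ω⟩ : 𝒮), C ω)) ⁻¹' {(⟨s, hs⟩, c)} =
      {ω | S ω = s ∧ C ω = c} := by
    ext; simp [Prod.ext_iff, Subtype.ext_iff]
  rw [hfib] at hF ⊢
  have hFm : MeasurableSet {ω | S ω = s ∧ C ω = c} :=
    (hS (measurableSet_singleton s)).inter (hC (measurableSet_singleton c))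
  have hslbs : slb ≤ s := by
    by_contra hlt
    refine hF (measure_mono_null (fun ω hω ↦ ?_) (ae_iff.1 hSlb))
    simp_all
  have hlaw := map_cond_eq_bernoulliPi hZ ⟨s, h𝒮 s hs⟩ (hBern s hs c (pos_iff_ne_zero.2 hF))
  have hBadF : {ω | S ω = s ∧ C ω = c} ∩
      {ω | ∃ i, t < |looComplierShareHat (C ω) (Z ω) i - looComplierShare (C ω) i|} =
      {ω | S ω = s ∧ C ω = c} ∩ Z ⁻¹' Bad c := by
    ext ω; constructor <;> rintro ⟨⟨hSω, rfl⟩, h⟩ <;> exact ⟨⟨hSω, rfl⟩, h⟩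
  calc _ = μ[Z ⁻¹' Bad c | {ω | S ω = s ∧ C ω = c}] := by
        rw [← cond_inter_self hFm, hBadF, cond_inter_self hFm]
    _ = bernoulliPi n ⟨s, h𝒮 s hs⟩ (Bad c) := by
        rw [← hlaw, Measure.map_apply hZ (DiscreteMeasurableSpace.forall_measurableSet _)]
    _ ≤ ENNReal.ofReal (3 * exp (-(n * s ^ 2 * t ^ 2 / 2))) := by
        rw [← ofReal_measureReal]
        have ht0 : 0 ≤ t := by nlinarith [mul_nonneg n.cast_nonneg hslb]
        exact ENNReal.ofReal_le_ofReal (bernoulliPi_real_exists_abs_sub_gt_le ⟨s, h𝒮 s hs⟩ c ht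
          (htn.trans (by gcongr)))
    _ ≤ _ := by gcongr

noncomputable def hStar (x t : ℝ) : ℝ := ((x - 2) / x) ^ 4 * t ^ 2 - 16 * t / (x - 2)

lemma hStar_add_le_sq {x : ℝ} (hx : 2 < x) (t : ℝ) : hStar x t + 16 * t / (x - 2) ≤ t ^ 2 := by
  have h4 : ((x - 2) / x) ^ 4 ≤ 1 :=
    pow_le_one₀ (by positivity) ((div_le_one (by linarith)).2 (by linarith))
  rw [hStar, sub_add_cancel]
  nlinarith [mul_le_mul_of_nonneg_right h4 (sq_nonneg t)]

lemma hStar_le_sq {x t : ℝ} (hx : 2 < x) (ht : 0 ≤ t) : hStar x t ≤ t ^ 2 := by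
  have : 0 ≤ 16 * t / (x - 2) := div_nonneg (by linarith) (by linarith)
  linarith [hStar_add_le_sq hx t]

lemma lt_mul_of_hStar_pos {x t : ℝ} (hx : 2 < x) (ht : 0 < t) (h : 0 < hStar x t) :
    16 < t * x := by
  have h16 : 16 * t / (x - 2) < t ^ 2 := by linarith [hStar_add_le_sq hx t]
  rw [div_lt_iff₀ (by linarith)] at h16
  nlinarith

lemma one_le_three_mul_exp_of_nonpos {G : ℕ} (hG : 1 ≤ G) {a h : ℝ} (ha : 0 ≤ a) (hh : h ≤ 0) :
    1 ≤ 3 * (G : ℝ) * exp (-(a * h) / 2) := by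
  have hG' : (1 : ℝ) ≤ G := by exact_mod_cast hG
  have : 1 ≤ exp (-(a * h) / 2) := one_le_exp (by nlinarith)
  nlinarith

theorem stmt19_general {Ω : Type*} [MeasurableSpace Ω] (μ : Measure Ω) [IsProbabilityMeasure μ]
    (G : ℕ) (hG : 1 ≤ G) (nlb : ℕ)
    (n : Fin G → ℕ) (hn : ∀ g, nlb ≤ n g)
    (𝒮 : Finset ℝ) (h𝒮 : ∀ s ∈ 𝒮, s ∈ Set.Icc (0 : ℝ) 1)
    (S : Fin G → Ω → ℝ) (hSmeas : ∀ g, Measurable (S g)) (hSval : ∀ g ω, S g ω ∈ 𝒮)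
    (C Z : ∀ g : Fin G, Ω → Fin (n g) → Bool)
    (hCmeas : ∀ g, Measurable (C g)) (hZmeas : ∀ g, Measurable (Z g))
    (hBern : ∀ g, ∀ s ∈ 𝒮, ∀ c : Fin (n g) → Bool,
      0 < μ {ω | S g ω = s ∧ C g ω = c} →
      ∀ z : Fin (n g) → Bool,
        (μ[|{ω | S g ω = s ∧ C g ω = c}] {ω | Z g ω = z}).toReal
          = ∏ j, (if z j then s else 1 - s))
    (slb : ℝ) (hslb0 : 0 < slb) (hsn : 2 < slb * nlb)
    (hSlb : ∀ g, ∀ᵐ ω ∂μ, slb ≤ S g ω)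
    (Cbar Chat : ∀ g : Fin G, Fin (n g) → Ω → ℝ)
    (hCbar : ∀ g i, Cbar g i = fun ω =>
      (∑ j ∈ Finset.univ.erase i, if C g ω j then (1 : ℝ) else 0) / ((n g : ℝ) - 1))
    (hChat : ∀ g i, Chat g i = fun ω =>
      if 0 < (∑ j ∈ Finset.univ.erase i, if Z g ω j then (1 : ℕ) else 0) then
        (∑ j ∈ Finset.univ.erase i, if C g ω j && Z g ω j then (1 : ℝ) else 0)
          / (∑ j ∈ Finset.univ.erase i, if Z g ω j then (1 : ℝ) else 0)
      else 0) :
    ∀ t : ℝ, 0 < t → t < 1 →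
      μ {ω | ∃ g, ∃ i, t < |Chat g i ω - Cbar g i ω|}
        ≤ ENNReal.ofReal (3 * (G : ℝ) * Real.exp (-((nlb : ℝ) * slb ^ 2 *
            (((slb * nlb - 2) / (slb * nlb)) ^ 4 * t ^ 2 - 16 * t / (slb * nlb - 2))) / 2)) := by
  intro t ht0 ht1
  change μ _ ≤ ENNReal.ofReal (3 * G * exp (-(nlb * slb ^ 2 * hStar (slb * nlb) t) / 2))
  by_cases hpos : 0 < hStar (slb * nlb) t
  swap
  · exact prob_le_one.trans (ENNReal.one_le_ofReal.2
      (one_le_three_mul_exp_of_nonpos hG (by positivity) (not_lt.1 hpos)))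
  have h16 := lt_mul_of_hStar_pos hsn ht0 hpos
  have hgroup (g : Fin G) : μ {ω | ∃ i, t < |Chat g i ω - Cbar g i ω|} ≤
      ENNReal.ofReal (3 * exp (-(nlb * slb ^ 2 * hStar (slb * nlb) t) / 2)) := by
    have hn' : (nlb : ℝ) ≤ n g := by exact_mod_cast hn g
    simp only [hChat, hCbar]
    refine (measure_exists_abs_looComplierShareHat_sub_gt_le h𝒮 (hSmeas g) (hSval g) (hCmeas g)
      (hZmeas g) (hBern g) hslb0.le (hSlb g) ht1.le
      (by nlinarith [mul_le_mul_of_nonneg_right hn' (mul_pos ht0 hslb0).le])).trans ?_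
    have := mul_le_mul hn' (hStar_le_sq hsn ht0.le) hpos.le (by positivity)
    gcongr
    nlinarith [mul_le_mul_of_nonneg_left this (sq_nonneg slb)]
  calc μ {ω | ∃ g, ∃ i, t < |Chat g i ω - Cbar g i ω|}
      ≤ ∑ g, μ {ω | ∃ i, t < |Chat g i ω - Cbar g i ω|} := by
        rw [Set.ofPred_exists]; exact measure_iUnion_fintype_le _ _
    _ ≤ ∑ _g : Fin G, ENNReal.ofReal (3 * exp (-(nlb * slb ^ 2 * hStar (slb * nlb) t) / 2)) :=
        sum_le_sum fun g _ ↦ hgroup g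
    _ = _ := by
        rw [sum_const, card_univ, Fintype.card_fin, nsmul_eq_mul, ← ENNReal.ofReal_natCast,
          ← ENNReal.ofReal_mul (by positivity)]
        ring_nf

/-- Union bound over `G` groups: uniform tail bound for the maximal error of the estimated
complier share, `P(max_g max_i |Ĉ_{ig} − C̄_{ig}| > t) ≤ 3 G exp(−n̲ s̲² h*(s̲n̲, t)/2)`
with `h*(x, t) = ((x−2)/x)⁴ t² − 16 t/(x−2)`. -/
theorem stmt19 {Ω : Type*} [MeasurableSpace Ω] (μ : Measure Ω) [IsProbabilityMeasure μ]
    (G : ℕ) (hG : 1 ≤ G) (nlb : ℕ) (hnlb : 2 ≤ nlb)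
    (n : Fin G → ℕ) (hn : ∀ g, nlb ≤ n g)
    (𝒮 : Finset ℝ) (h𝒮 : ∀ s ∈ 𝒮, s ∈ Set.Icc (0 : ℝ) 1)
    (S : Fin G → Ω → ℝ) (hSmeas : ∀ g, Measurable (S g)) (hSval : ∀ g ω, S g ω ∈ 𝒮)
    (C Z : ∀ g : Fin G, Ω → Fin (n g) → Bool)
    (hCmeas : ∀ g, Measurable (C g)) (hZmeas : ∀ g, Measurable (Z g))
    (hBern : ∀ g, ∀ s ∈ 𝒮, ∀ c : Fin (n g) → Bool,
      0 < μ {ω | S g ω = s ∧ C g ω = c} →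
      ∀ z : Fin (n g) → Bool,
        (μ[|{ω | S g ω = s ∧ C g ω = c}] {ω | Z g ω = z}).toReal
          = ∏ j, (if z j then s else 1 - s))
    (slb : ℝ) (hslb0 : 0 < slb) (hslb1 : slb ≤ 1) (hsn : 2 < slb * nlb)
    (hSlb : ∀ g, ∀ᵐ ω ∂μ, slb ≤ S g ω)
    (Cbar Chat : ∀ g : Fin G, Fin (n g) → Ω → ℝ)
    (hCbar : ∀ g i, Cbar g i = fun ω =>
      (∑ j ∈ Finset.univ.erase i, if C g ω j then (1 : ℝ) else 0) / ((n g : ℝ) - 1))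
    (hChat : ∀ g i, Chat g i = fun ω =>
      if 0 < (∑ j ∈ Finset.univ.erase i, if Z g ω j then (1 : ℕ) else 0) then
        (∑ j ∈ Finset.univ.erase i, if C g ω j && Z g ω j then (1 : ℝ) else 0)
          / (∑ j ∈ Finset.univ.erase i, if Z g ω j then (1 : ℝ) else 0)
      else 0) :
    ∀ t : ℝ, 0 < t → t < 1 →
      μ {ω | ∃ g, ∃ i, t < |Chat g i ω - Cbar g i ω|}
        ≤ ENNReal.ofReal (3 * (G : ℝ) * Real.exp (-((nlb : ℝ) * slb ^ 2 *
            (((slb * nlb - 2) / (slb * nlb)) ^ 4 * t ^ 2 - 16 * t / (slb * nlb - 2))) / 2)) :=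
  stmt19_general μ G hG nlb n hn 𝒮 h𝒮 S hSmeas hSval C Z hCmeas hZmeas hBern slb hslb0 hsn hSlb Cbar
    Chat hCbar hChat
end
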